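/- arXiv:2003.03352 — 9 statements merged into one kernel-verified Lean document; each statement's English description precedes it below -/
import Mathlib

section
/- Let 0 < α < 1, δ > 0 and η ≤ δ. For any function Y : (0,T] → ℝ, the restricted seminorm [Y] := sup over pairs 0<s<t≤T with |t−s| ≤ s of |Y_t − Y_s|/(s^{η−δ}|t−s|^α) is equivalent to the full seminorm sup over all pairs 0<s<t≤T of |Y_t − Y_s|/(s^{η−δ}|t−s|^α): the restricted seminorm is bounded by the full one, and the full one is bounded by C·[Y] for a constant C depending only on α, η, δ. -/
open Set ENNReal

/-- Full singular seminorm: sup over all pairs `0 < s < t ≤ T`. -/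
noncomputable def fullSemi (T α δ η : ℝ) (Y : ℝ → ℝ) : ℝ≥0∞ :=
  ⨆ s : ℝ, ⨆ t : ℝ, ⨆ _ : 0 < s ∧ s < t ∧ t ≤ T,
    ENNReal.ofReal (|Y t - Y s| / (s ^ (η - δ) * (t - s) ^ α))

/-- Restricted singular seminorm: sup over pairs with additionally `t - s ≤ s`. -/
noncomputable def restrSemi (T α δ η : ℝ) (Y : ℝ → ℝ) : ℝ≥0∞ :=
  ⨆ s : ℝ, ⨆ t : ℝ, ⨆ _ : 0 < s ∧ s < t ∧ t ≤ T ∧ t - s ≤ s,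
    ENNReal.ofReal (|Y t - Y s| / (s ^ (η - δ) * (t - s) ^ α))
/-
Chain along the dyadic points `t, t/2, t/4, …` down to the first one within `2s` of `s`. Each link
is a restricted pair, the weight `s ^ (η - δ)` only grows towards `s`, and the distances to `s` at
least halve at each step, so the link bounds decay geometrically with ratio `2 ^ (-α)` and sum to at
most `(1 - 2 ^ (-α))⁻¹ s ^ (η - δ) (t - s) ^ α`.
-/

lemma rpow_le_two_rpow_neg_mul {x y α : ℝ} (hx : 0 ≤ x) (hxy : x ≤ y / 2) (hα : 0 ≤ α) :
    x ^ α ≤ 2 ^ (-α) * y ^ α := by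
  calc x ^ α ≤ (y / 2) ^ α := Real.rpow_le_rpow hx hxy hα
    _ = 2 ^ (-α) * y ^ α := by
      rw [Real.div_rpow (by linarith) zero_le_two, Real.rpow_neg zero_le_two, div_eq_inv_mul]

lemma two_rpow_neg_lt_one {α : ℝ} (hα : 0 < α) : (2 : ℝ) ^ (-α) < 1 :=
  Real.rpow_lt_one_of_one_lt_of_neg one_lt_two (neg_neg_iff_pos.mpr hα)

theorem abs_sub_le_of_abs_sub_le_of_le_two_mul {Y w : ℝ → ℝ} {T α s t : ℝ} (hα : 0 < α)
    (hw : AntitoneOn w (Ioi 0)) (hws : 0 ≤ w s)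
    (hY : ∀ s t, 0 < s → s < t → t ≤ T → t ≤ 2 * s → |Y t - Y s| ≤ w s * (t - s) ^ α)
    (hs : 0 < s) (hst : s < t) (htT : t ≤ T) :
    |Y t - Y s| ≤ (1 - 2 ^ (-α))⁻¹ * w s * (t - s) ^ α := by
  set r : ℝ := 2 ^ (-α)
  have hr : r < 1 := two_rpow_neg_lt_one hα
  have hK : 1 ≤ (1 - r)⁻¹ :=
    (one_le_inv₀ (by linarith)).mpr (by linarith [Real.rpow_nonneg zero_le_two (-α)])
  obtain ⟨n, hn⟩ := pow_unbounded_of_one_lt (t / s) one_lt_two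
  rw [div_lt_iff₀ hs] at hn
  induction n generalizing t with
  | zero => linarith [pow_zero (2 : ℝ)]
  | succ n ih =>
    have hD : 0 ≤ w s * (t - s) ^ α := mul_nonneg hws (Real.rpow_nonneg (by linarith) α)
    by_cases hnear : t ≤ 2 * s
    · calc |Y t - Y s| ≤ w s * (t - s) ^ α := hY s t hs hst htT hnear
        _ ≤ (1 - r)⁻¹ * w s * (t - s) ^ α := by
          rw [mul_assoc]; exact le_mul_of_one_le_left hD hK
    set u := t / 2
    have htu : t = 2 * u := by ring
    have hsu : s < u := by linarith
    have hlink : |Y t - Y u| ≤ w s * (t - s) ^ α :=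
      calc |Y t - Y u| ≤ w u * (t - u) ^ α := hY u t (hs.trans hsu) (by linarith) htT (by linarith)
        _ ≤ w s * (t - s) ^ α :=
          mul_le_mul (hw hs (hs.trans hsu) hsu.le) (Real.rpow_le_rpow (by linarith) (by linarith)
            hα.le) (Real.rpow_nonneg (by linarith) α) hws
    have hrest : |Y u - Y s| ≤ (1 - r)⁻¹ * w s * (r * (t - s) ^ α) :=
      calc |Y u - Y s| ≤ (1 - r)⁻¹ * w s * (u - s) ^ α :=
            ih hsu (by linarith) (by rw [pow_succ] at hn; linarith)
        _ ≤ (1 - r)⁻¹ * w s * (r * (t - s) ^ α) :=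
          mul_le_mul_of_nonneg_left (rpow_le_two_rpow_neg_mul (by linarith) (by linarith) hα.le)
            (mul_nonneg (by linarith) hws)
    calc |Y t - Y s| ≤ |Y t - Y u| + |Y u - Y s| := abs_sub_le _ _ _
      _ ≤ (1 + (1 - r)⁻¹ * r) * (w s * (t - s) ^ α) := by nlinarith
      _ = (1 - r)⁻¹ * w s * (t - s) ^ α := by field_simp [(by linarith : 1 - r ≠ 0)]; ring

section Seminorms

variable {T α δ η : ℝ} {Y : ℝ → ℝ}

lemma restrSemi_le_fullSemi : restrSemi T α δ η Y ≤ fullSemi T α δ η Y :=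
  iSup₂_mono fun _ _ => iSup_mono' fun h => ⟨⟨h.1, h.2.1, h.2.2.1⟩, le_rfl⟩

lemma abs_sub_le_toReal_restrSemi_mul (h : restrSemi T α δ η Y ≠ ⊤) {s t : ℝ} (hs : 0 < s)
    (hst : s < t) (htT : t ≤ T) (hts : t - s ≤ s) :
    |Y t - Y s| ≤ (restrSemi T α δ η Y).toReal * s ^ (η - δ) * (t - s) ^ α := by
  have hD : 0 < s ^ (η - δ) * (t - s) ^ α :=
    mul_pos (Real.rpow_pos_of_pos hs _) (Real.rpow_pos_of_pos (sub_pos.2 hst) _)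
  have hle : ENNReal.ofReal (|Y t - Y s| / (s ^ (η - δ) * (t - s) ^ α)) ≤ restrSemi T α δ η Y :=
    le_iSup₂_of_le s t (le_iSup_of_le ⟨hs, hst, htT, hts⟩ le_rfl)
  rw [ENNReal.ofReal_le_iff_le_toReal h, div_le_iff₀ hD] at hle
  rwa [mul_assoc]

lemma fullSemi_le_ofReal {B : ℝ}
    (hB : ∀ s t, 0 < s → s < t → t ≤ T → |Y t - Y s| ≤ B * s ^ (η - δ) * (t - s) ^ α) :
    fullSemi T α δ η Y ≤ ENNReal.ofReal B := by
  refine iSup₂_le fun s t => iSup_le fun ⟨hs, hst, htT⟩ => ENNReal.ofReal_le_ofReal ?_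
  have hD : 0 < s ^ (η - δ) * (t - s) ^ α :=
    mul_pos (Real.rpow_pos_of_pos hs _) (Real.rpow_pos_of_pos (sub_pos.2 hst) _)
  rw [div_le_iff₀ hD, ← mul_assoc]
  exact hB s t hs hst htT

theorem fullSemi_le_mul_restrSemi (hα : 0 < α) (hηδ : η ≤ δ) :
    fullSemi T α δ η Y ≤ ENNReal.ofReal (1 - 2 ^ (-α))⁻¹ * restrSemi T α δ η Y := by
  have hK : 0 < (1 - (2 : ℝ) ^ (-α))⁻¹ := inv_pos.2 (sub_pos.2 (two_rpow_neg_lt_one hα))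
  by_cases htop : restrSemi T α δ η Y = ⊤
  · rw [htop, ENNReal.mul_top (ENNReal.ofReal_pos.2 hK).ne']
    exact le_top
  set M := (restrSemi T α δ η Y).toReal
  have hweight : AntitoneOn (fun s => M * s ^ (η - δ)) (Ioi 0) := fun a ha b _ hab =>
    mul_le_mul_of_nonneg_left (Real.rpow_le_rpow_of_nonpos ha hab (sub_nonpos.2 hηδ))
      ENNReal.toReal_nonneg
  calc fullSemi T α δ η Y ≤ ENNReal.ofReal ((1 - 2 ^ (-α))⁻¹ * M) := by
        refine fullSemi_le_ofReal fun s t hs hst htT => ?_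
        rw [mul_assoc _ M]
        exact abs_sub_le_of_abs_sub_le_of_le_two_mul hα hweight
          (mul_nonneg ENNReal.toReal_nonneg (Real.rpow_nonneg hs.le _))
          (fun s t hs hst htT hnear =>
            abs_sub_le_toReal_restrSemi_mul htop hs hst htT (by linarith))
          hs hst htT
    _ = ENNReal.ofReal (1 - 2 ^ (-α))⁻¹ * restrSemi T α δ η Y := by
        rw [ENNReal.ofReal_mul hK.le, ENNReal.ofReal_toReal htop]

end Seminorms

theorem restricted_full_seminorm_equivalence_general
    (α δ η : ℝ) (hα0 : 0 < α) (hηδ : η ≤ δ) :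
    ∃ C : ℝ, 0 < C ∧ ∀ T : ℝ, 0 < T → ∀ Y : ℝ → ℝ,
      restrSemi T α δ η Y ≤ fullSemi T α δ η Y ∧
      fullSemi T α δ η Y ≤ ENNReal.ofReal C * restrSemi T α δ η Y :=
  ⟨_, inv_pos.2 (sub_pos.2 (two_rpow_neg_lt_one hα0)),
    fun _ _ _ => ⟨restrSemi_le_fullSemi, fullSemi_le_mul_restrSemi hα0 hηδ⟩⟩

theorem restricted_full_seminorm_equivalence
    (α δ η : ℝ) (hα0 : 0 < α) (hα1 : α < 1) (hδ : 0 < δ) (hηδ : η ≤ δ) :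
    ∃ C : ℝ, 0 < C ∧ ∀ T : ℝ, 0 < T → ∀ Y : ℝ → ℝ,
      restrSemi T α δ η Y ≤ fullSemi T α δ η Y ∧
      fullSemi T α δ η Y ≤ ENNReal.ofReal C * restrSemi T α δ η Y :=
  restricted_full_seminorm_equivalence_general α δ η hα0 hηδ
end

section
/- Let 0 < α < 1 and 0 < η ≤ α. A continuous path Y : (0,T] → ℝ belongs to the singular Hölder space C^{α,η}((0,T]) if and only if the reparametrized path t ↦ Y(t^{α/η}) extends to (is) an α-Hölder continuous function on [0, T^{η/α}]. -/
/-!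
Under the time change `u = t ^ (η / α)` the singular weight `s ^ (η - α)` is exactly absorbed:
for comparable times `s ≤ t ≤ 2 s` the singular bound on `Y` becomes an `α`-Hölder bound on
`Z u = Y (u ^ (α / η))`, by the mean value estimate for `u ↦ u ^ (α / η)`. Chaining along
`t, t / 2, t / 4, …` sums a geometric series (as `α > 0`) and upgrades this near-diagonal bound to a
global Hölder bound on `(0, T ^ (η / α)]`; then `Z` is Cauchy at `0` and extends Hölder continuously
to the closed interval. Conversely, concavity of `t ↦ t ^ (η / α)` gives
`t ^ (η / α) - s ^ (η / α) ≤ s ^ (η / α - 1) (t - s)`, which turns the Hölder bound on `Z` back into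
the singular one.
-/

open Set Real Filter Topology

lemma rpow_sub_rpow_le_of_one_le {β s t : ℝ} (hβ : 1 ≤ β) (hs : 0 < s) (hst : s ≤ t) :
    t ^ β - s ^ β ≤ β * t ^ (β - 1) * (t - s) := by
  have ht : 0 < t := hs.trans_le hst
  -- Bernoulli's inequality `(s / t) ^ β ≥ 1 + β (s / t - 1)`, multiplied by `t ^ β`
  have hB := one_add_mul_self_le_rpow_one_add (by linarith [div_pos hs ht] : -1 ≤ s / t - 1) hβ
  rw [add_sub_cancel, div_rpow hs.le ht.le, le_div_iff₀ (rpow_pos_of_pos ht β)] at hB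
  have ht1 : t ^ β = t ^ (β - 1) * t := by rw [rpow_sub_one ht.ne']; field_simp
  have hexp : (1 + β * (s / t - 1)) * t ^ β = t ^ β - β * t ^ (β - 1) * (t - s) := by
    rw [ht1]; field_simp; ring
  linarith

lemma rpow_sub_rpow_le_of_le_one {γ s t : ℝ} (hγ : γ ≤ 1) (hs : 0 < s) (hst : s ≤ t) :
    t ^ γ - s ^ γ ≤ s ^ (γ - 1) * (t - s) := by
  have hts : (t / s) ^ γ ≤ t / s := rpow_le_self_of_one_le ((one_le_div hs).2 hst) hγ
  rw [div_rpow (hs.le.trans hst) hs.le, div_le_iff₀ (rpow_pos_of_pos hs γ)] at hts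
  have hs1 : s ^ γ = s ^ (γ - 1) * s := by rw [rpow_sub_one hs.ne']; field_simp
  have : t / s * s ^ γ = s ^ (γ - 1) * t := by rw [hs1]; field_simp
  linarith

lemma rpow_sub_rpow_le_of_le_two_mul {β s t : ℝ} (hβ : 1 ≤ β) (hs : 0 < s) (hst : s ≤ t)
    (ht : t ≤ 2 * s) : t ^ β - s ^ β ≤ β * 2 ^ (β - 1) * s ^ (β - 1) * (t - s) := by
  have h2 : t ^ (β - 1) ≤ 2 ^ (β - 1) * s ^ (β - 1) := by
    rw [← mul_rpow zero_le_two hs.le]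
    exact rpow_le_rpow (hs.le.trans hst) ht (by linarith)
  calc t ^ β - s ^ β ≤ β * t ^ (β - 1) * (t - s) := rpow_sub_rpow_le_of_one_le hβ hs hst
    _ ≤ β * (2 ^ (β - 1) * s ^ (β - 1)) * (t - s) := by gcongr
    _ = β * 2 ^ (β - 1) * s ^ (β - 1) * (t - s) := by ring

lemma abs_rpow_div_sub_rpow_div_rpow_le {α η s t : ℝ} (hα : 0 < α) (hη : 0 ≤ η) (hηα : η ≤ α)
    (hs : 0 < s) (hst : s ≤ t) :
    |t ^ (η / α) - s ^ (η / α)| ^ α ≤ s ^ (η - α) * (t - s) ^ α := by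
  have hγ : η / α ≤ 1 := (div_le_one hα).2 hηα
  have hmono : s ^ (η / α) ≤ t ^ (η / α) := rpow_le_rpow hs.le hst (div_nonneg hη hα.le)
  calc |t ^ (η / α) - s ^ (η / α)| ^ α ≤ (s ^ (η / α - 1) * (t - s)) ^ α := by
        rw [abs_of_nonneg (sub_nonneg.2 hmono)]
        exact rpow_le_rpow (sub_nonneg.2 hmono) (rpow_sub_rpow_le_of_le_one hγ hs hst) hα.le
    _ = s ^ (η - α) * (t - s) ^ α := by
        rw [mul_rpow (rpow_nonneg hs.le _) (sub_nonneg.2 hst), ← rpow_mul hs.le]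
        congr 2
        field_simp

lemma abs_sub_le_of_singular_holder_of_le_two_mul {K α η T : ℝ} {Y : ℝ → ℝ} (hK : 0 ≤ K)
    (hα : 0 < α) (hη : 0 < η) (hηα : η ≤ α)
    (hY : ∀ s t : ℝ, 0 < s → s < t → t ≤ T → |Y t - Y s| ≤ K * s ^ (η - α) * (t - s) ^ α)
    {s t : ℝ} (hs : 0 < s) (hst : s ≤ t) (ht : t ≤ 2 * s) (htT : t ^ (α / η) ≤ T) :
    |Y (t ^ (α / η)) - Y (s ^ (α / η))| ≤ K * (α / η * 2 ^ (α / η - 1)) ^ α * (t - s) ^ α := by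
  set β := α / η
  rcases hst.eq_or_lt with rfl | hlt
  · simp [zero_rpow hα.ne']
  have hβ : 1 ≤ β := (one_le_div hη).2 hηα
  have hsβ : 0 < s ^ β := rpow_pos_of_pos hs β
  -- the singular weight `(s ^ β) ^ (η - α)` exactly cancels the factor `(s ^ (β - 1)) ^ α`
  have hcancel : (s ^ β) ^ (η - α) * (s ^ (β - 1)) ^ α = 1 := by
    rw [← rpow_mul hs.le, ← rpow_mul hs.le, ← rpow_add hs]
    convert rpow_zero s using 2
    simp only [β]; field_simp; ring
  calc |Y (t ^ β) - Y (s ^ β)|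
      ≤ K * (s ^ β) ^ (η - α) * (t ^ β - s ^ β) ^ α :=
        hY _ _ hsβ (rpow_lt_rpow hs.le hlt (by positivity)) htT
    _ ≤ K * (s ^ β) ^ (η - α) * (β * 2 ^ (β - 1) * s ^ (β - 1) * (t - s)) ^ α := by
        gcongr
        · exact sub_nonneg.2 (rpow_le_rpow hs.le hst (by positivity))
        · exact rpow_sub_rpow_le_of_le_two_mul hβ hs hst ht
    _ = K * (β * 2 ^ (β - 1)) ^ α * (t - s) ^ α * ((s ^ β) ^ (η - α) * (s ^ (β - 1)) ^ α) := by
        rw [mul_rpow (by positivity) (sub_nonneg.2 hst), mul_rpow (by positivity) (by positivity)]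
        ring
    _ = K * (β * 2 ^ (β - 1)) ^ α * (t - s) ^ α := by rw [hcancel, mul_one]

section NearDiagonal

variable {S α A : ℝ} {Z : ℝ → ℝ}

lemma abs_sub_le_of_le_two_pow_mul (hα : 0 < α) (hA : 0 ≤ A)
    (hnear : ∀ s t : ℝ, 0 < s → s ≤ t → t ≤ S → t ≤ 2 * s → |Z t - Z s| ≤ A * (t - s) ^ α)
    (n : ℕ) {s t : ℝ} (hs : 0 < s) (hst : s ≤ t) (htS : t ≤ S) (hn : t ≤ 2 ^ n * s) :
    |Z t - Z s| ≤ A / (2 ^ α - 1) * t ^ α := by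
  set B := A / (2 ^ α - 1)
  have h2α : 1 < (2 : ℝ) ^ α := one_lt_rpow one_lt_two hα
  have hB : 0 ≤ B := div_nonneg hA (by linarith)
  -- `B` is the sum of the geometric series `A (2 ^ -α + 2 ^ -2α + ⋯)`
  have hgeom : (A + B) / 2 ^ α = B := by
    have : (2 : ℝ) ^ α - 1 ≠ 0 := by linarith
    simp only [B]; field_simp; ring
  have hhalf : ∀ t : ℝ, 0 ≤ t → (t / 2) ^ α = t ^ α / 2 ^ α := fun t ht => div_rpow ht zero_le_two α
  induction n generalizing t with
  | zero =>
    rw [le_antisymm (by simpa using hn) hst, sub_self, abs_zero]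
    exact mul_nonneg hB (rpow_nonneg hs.le α)
  | succ n ih =>
    have ht : 0 < t := hs.trans_le hst
    rcases le_or_gt t (2 * s) with ht2 | ht2
    · calc |Z t - Z s| ≤ A * (t - s) ^ α := hnear s t hs hst htS ht2
        _ ≤ A * (t / 2) ^ α := by gcongr; linarith
        _ ≤ (A + B) * (t / 2) ^ α := by gcongr; linarith
        _ = (A + B) / 2 ^ α * t ^ α := by rw [hhalf t ht.le]; ring
        _ = B * t ^ α := by rw [hgeom]
    · have hmid : |Z (t / 2) - Z s| ≤ B * (t / 2) ^ α :=
        ih (by linarith) (by linarith) (by rw [pow_succ] at hn; linarith)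
      calc |Z t - Z s| ≤ |Z t - Z (t / 2)| + |Z (t / 2) - Z s| := abs_sub_le _ _ _
        _ ≤ A * (t - t / 2) ^ α + B * (t / 2) ^ α := by
          gcongr
          exact hnear _ _ (by positivity) (by linarith) htS (by linarith)
        _ = (A + B) / 2 ^ α * t ^ α := by rw [show t - t / 2 = t / 2 by ring, hhalf t ht.le]; ring
        _ = B * t ^ α := by rw [hgeom]

lemma holder_of_near_diagonal (hα : 0 < α) (hA : 0 ≤ A)
    (hnear : ∀ s t : ℝ, 0 < s → s ≤ t → t ≤ S → t ≤ 2 * s → |Z t - Z s| ≤ A * (t - s) ^ α)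
    {s t : ℝ} (hs : 0 < s) (hst : s ≤ t) (htS : t ≤ S) :
    |Z t - Z s| ≤ A * 2 ^ α / (2 ^ α - 1) * (t - s) ^ α := by
  have h2α : 1 < (2 : ℝ) ^ α := one_lt_rpow one_lt_two hα
  rcases le_or_gt t (2 * s) with ht2 | ht2
  · calc |Z t - Z s| ≤ A * (t - s) ^ α := hnear s t hs hst htS ht2
      _ ≤ A * 2 ^ α / (2 ^ α - 1) * (t - s) ^ α := by
        gcongr
        rw [mul_div_assoc]
        exact le_mul_of_one_le_right hA ((one_le_div (by linarith)).2 (by linarith))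
  · obtain ⟨n, hn⟩ := pow_unbounded_of_one_lt (t / s) one_lt_two
    calc |Z t - Z s| ≤ A / (2 ^ α - 1) * t ^ α :=
          abs_sub_le_of_le_two_pow_mul hα hA hnear n hs hst htS ((div_lt_iff₀ hs).1 hn).le
      _ ≤ A / (2 ^ α - 1) * (2 * (t - s)) ^ α :=
          mul_le_mul_of_nonneg_left (rpow_le_rpow (by linarith) (by linarith) hα.le)
            (div_nonneg hA (by linarith))
      _ = A * 2 ^ α / (2 ^ α - 1) * (t - s) ^ α := by
          rw [mul_rpow zero_le_two (by linarith)]; ring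

end NearDiagonal

section ExtensionToZero

variable {S α C : ℝ} {Z : ℝ → ℝ}

lemma exists_tendsto_nhdsGT_zero_of_holder (hα : 0 < α) (hS : 0 < S) (hC : 0 ≤ C)
    (hZ : ∀ s t : ℝ, 0 < s → s ≤ t → t ≤ S → |Z t - Z s| ≤ C * (t - s) ^ α) :
    ∃ L, Tendsto Z (𝓝[>] 0) (𝓝 L) := by
  refine cauchy_map_iff_exists_tendsto.1 (Metric.cauchy_iff.2 ⟨inferInstance, fun ε hε => ?_⟩)
  have hsmall : ∀ᶠ x in 𝓝[>] (0 : ℝ), C * x ^ α < ε := by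
    have : Tendsto (fun x : ℝ => C * x ^ α) (𝓝 0) (𝓝 0) := by
      simpa [zero_rpow hα.ne'] using ((continuous_rpow_const hα.le).const_mul C).tendsto 0
    exact (this.eventually (gt_mem_nhds hε)).filter_mono nhdsWithin_le_nhds
  set U := Ioc 0 S ∩ {x | C * x ^ α < ε}
  have hU : U ∈ 𝓝[>] (0 : ℝ) := inter_mem (Ioc_mem_nhdsGT hS) hsmall
  refine ⟨_, image_mem_map hU, ?_⟩
  have key : ∀ x ∈ U, ∀ y ∈ U, x ≤ y → |Z y - Z x| < ε := by
    rintro x ⟨⟨hx0, -⟩, -⟩ y ⟨⟨-, hyS⟩, hyε⟩ hxy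
    calc |Z y - Z x| ≤ C * (y - x) ^ α := hZ x y hx0 hxy hyS
      _ ≤ C * y ^ α := by gcongr; linarith
      _ < ε := hyε
  rintro _ ⟨x, hx, rfl⟩ _ ⟨y, hy, rfl⟩
  rw [Real.dist_eq]
  rcases le_total x y with hxy | hxy
  · rw [abs_sub_comm]; exact key x hx y hy hxy
  · exact key y hy x hx hxy

lemma abs_update_zero_sub_le_of_holder (hα : 0 < α)
    (hZ : ∀ s t : ℝ, 0 < s → s ≤ t → t ≤ S → |Z t - Z s| ≤ C * (t - s) ^ α)
    {L : ℝ} (hL : Tendsto Z (𝓝[>] 0) (𝓝 L)) {s t : ℝ} (hs : s ∈ Icc 0 S) (ht : t ∈ Icc 0 S) :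
    |Function.update Z 0 L t - Function.update Z 0 L s| ≤ C * |t - s| ^ α := by
  wlog hst : s ≤ t generalizing s t
  · rw [abs_sub_comm, abs_sub_comm t]
    exact this ht hs (le_of_not_ge hst)
  rw [abs_of_nonneg (sub_nonneg.2 hst)]
  rcases ht.1.eq_or_lt with rfl | ht0
  · simp [le_antisymm hst hs.1, zero_rpow hα.ne']
  rw [Function.update_of_ne ht0.ne']
  rcases hs.1.eq_or_lt with rfl | hs0
  · rw [Function.update_self]
    have hdist : Tendsto (fun x => |Z t - Z x|) (𝓝[>] 0) (𝓝 |Z t - L|) :=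
      (tendsto_const_nhds.sub hL).abs
    have hbound : Tendsto (fun x => C * (t - x) ^ α) (𝓝[>] 0) (𝓝 (C * (t - 0) ^ α)) :=
      (((continuous_const.sub continuous_id).rpow_const fun _ => Or.inr hα.le).const_mul C
        |>.tendsto 0).mono_left nhdsWithin_le_nhds
    refine le_of_tendsto_of_tendsto hdist hbound ?_
    filter_upwards [Ioc_mem_nhdsGT ht0] with x hx using hZ x t hx.1 hx.2 ht.2
  · rw [Function.update_of_ne hs0.ne']
    exact hZ s t hs0 hst ht.2

lemma exists_holder_extension_Icc (hα : 0 < α) (hS : 0 < S) (hC : 0 ≤ C)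
    (hZ : ∀ s t : ℝ, 0 < s → s ≤ t → t ≤ S → |Z t - Z s| ≤ C * (t - s) ^ α) :
    ∃ W : ℝ → ℝ, (∀ t ∈ Ioc 0 S, W t = Z t) ∧
      ∀ s ∈ Icc 0 S, ∀ t ∈ Icc 0 S, |W t - W s| ≤ C * |t - s| ^ α := by
  obtain ⟨L, hL⟩ := exists_tendsto_nhdsGT_zero_of_holder hα hS hC hZ
  exact ⟨Function.update Z 0 L, fun t ht => Function.update_of_ne ht.1.ne' _ _,
    fun s hs t ht => abs_update_zero_sub_le_of_holder hα hZ hL hs ht⟩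

end ExtensionToZero

theorem singular_holder_time_change_general
    (T α η : ℝ) (hT : 0 < T) (hα0 : 0 < α) (hη0 : 0 < η) (hηα : η ≤ α)
    (Y : ℝ → ℝ) :
    (∃ K : ℝ, 0 ≤ K ∧ ∀ s t : ℝ, 0 < s → s < t → t ≤ T →
        |Y t - Y s| ≤ K * s ^ (η - α) * (t - s) ^ α) ↔
    (∃ Z : ℝ → ℝ,
      (∀ t ∈ Ioc (0:ℝ) (T ^ (η / α)), Z t = Y (t ^ (α / η))) ∧
      ∃ C : ℝ, 0 ≤ C ∧ ∀ s ∈ Icc (0:ℝ) (T ^ (η / α)), ∀ t ∈ Icc (0:ℝ) (T ^ (η / α)),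
        |Z t - Z s| ≤ C * |t - s| ^ α) := by
  have hpow : ∀ {a b x : ℝ}, 0 < a → 0 < b → 0 ≤ x → (x ^ (a / b)) ^ (b / a) = x :=
    fun {a b _} ha hb hx => by rw [← inv_div a b, rpow_rpow_inv hx (div_pos ha hb).ne']
  constructor
  · rintro ⟨K, hK, hY⟩
    set A := K * (α / η * 2 ^ (α / η - 1)) ^ α
    have hnear : ∀ s t : ℝ, 0 < s → s ≤ t → t ≤ T ^ (η / α) → t ≤ 2 * s →
        |Y (t ^ (α / η)) - Y (s ^ (α / η))| ≤ A * (t - s) ^ α := fun s t hs hst htS ht2 =>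
      abs_sub_le_of_singular_holder_of_le_two_mul hK hα0 hη0 hηα hY hs hst ht2
        ((rpow_le_rpow (hs.le.trans hst) htS (div_pos hα0 hη0).le).trans_eq (hpow hη0 hα0 hT.le))
    have hC : 0 ≤ A * 2 ^ α / (2 ^ α - 1) :=
      div_nonneg (by positivity) (sub_nonneg.2 (one_le_rpow one_le_two hα0.le))
    obtain ⟨Z, hZY, hZ⟩ := exists_holder_extension_Icc hα0 (rpow_pos_of_pos hT _) hC
      fun s t hs hst htS => holder_of_near_diagonal hα0 (by positivity) hnear hs hst htS
    exact ⟨Z, hZY, _, hC, hZ⟩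
  · rintro ⟨Z, hZY, C, hC, hZ⟩
    refine ⟨C, hC, fun s t hs hst htT => ?_⟩
    have hmem : ∀ x, 0 < x → x ≤ T → x ^ (η / α) ∈ Ioc 0 (T ^ (η / α)) := fun x hx hxT =>
      ⟨rpow_pos_of_pos hx _, rpow_le_rpow hx.le hxT (div_pos hη0 hα0).le⟩
    have hYZ : ∀ x, 0 < x → x ≤ T → Y x = Z (x ^ (η / α)) := fun x hx hxT => by
      rw [hZY _ (hmem x hx hxT), hpow hη0 hα0 hx.le]
    rw [hYZ t (hs.trans hst) htT, hYZ s hs (hst.le.trans htT)]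
    calc |Z (t ^ (η / α)) - Z (s ^ (η / α))| ≤ C * |t ^ (η / α) - s ^ (η / α)| ^ α :=
          hZ _ (Ioc_subset_Icc_self (hmem s hs (hst.le.trans htT)))
            _ (Ioc_subset_Icc_self (hmem t (hs.trans hst) htT))
      _ ≤ C * (s ^ (η - α) * (t - s) ^ α) := by
          gcongr
          exact abs_rpow_div_sub_rpow_div_rpow_le hα0 hη0.le hηα hs hst.le
      _ = C * s ^ (η - α) * (t - s) ^ α := by ring

theorem singular_holder_time_change
    (T α η : ℝ) (hT : 0 < T) (hα0 : 0 < α) (hα1 : α < 1) (hη0 : 0 < η) (hηα : η ≤ α)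
    (Y : ℝ → ℝ) (hcont : ContinuousOn Y (Ioc 0 T)) :
    (∃ K : ℝ, 0 ≤ K ∧ ∀ s t : ℝ, 0 < s → s < t → t ≤ T →
        |Y t - Y s| ≤ K * s ^ (η - α) * (t - s) ^ α) ↔
    (∃ Z : ℝ → ℝ,
      (∀ t ∈ Ioc (0:ℝ) (T ^ (η / α)), Z t = Y (t ^ (α / η))) ∧
      ∃ C : ℝ, 0 ≤ C ∧ ∀ s ∈ Icc (0:ℝ) (T ^ (η / α)), ∀ t ∈ Icc (0:ℝ) (T ^ (η / α)),
        |Z t - Z s| ≤ C * |t - s| ^ α) :=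
  singular_holder_time_change_general T α η hT hα0 hη0 hηα Y
end

section
/- (Improper Young integral) Let α₁, α₂ ∈ (0,1) with α₁ + α₂ > 1, let Y ∈ C^{α₁,η₁}((0,T]) and X ∈ C^{α₂,η₂}((0,T]). If η₂ > 0, η₁ + η₂ > 0 and η₁ ≠ 0, then for every 0 < t ≤ T the limit ∫_{0⁺}^t Y_r dX_r := lim_{ε→0⁺} ∫_ε^t Y_r dX_r of Young integrals exists. -/
open Set Filter

set_option maxHeartbeats 2000000 in
/-- Improper Young integral: existence of the limit `∫_{0+}^t Y dX` of Young integrals.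
`I s t` denotes the Young integral `∫_s^t Y_r dX_r` on `[s,t] ⊆ (0,T]`, which is
additive and satisfies the standard Young (sewing) estimate, with the interval Hölder
norms bounded through the singular Hölder norms of `Y ∈ C^{α₁,η₁}` and `X ∈ C^{α₂,η₂}`. -/
theorem improper_young_integral_exists
    (T α₁ α₂ η₁ η₂ : ℝ) (hT : 0 < T)
    (hα₁ : 0 < α₁) (hα₁' : α₁ < 1) (hα₂ : 0 < α₂) (hα₂' : α₂ < 1)
    (hsum : 1 < α₁ + α₂) (hη₁α : η₁ ≤ α₁) (hη₂α : η₂ ≤ α₂)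
    (hη₂ : 0 < η₂) (hη₁₂ : 0 < η₁ + η₂) (hη₁ : η₁ ≠ 0)
    (Y X : ℝ → ℝ) (I : ℝ → ℝ → ℝ) (CY CX Csew : ℝ)
    (hCY : 0 ≤ CY) (hCX : 0 ≤ CX) (hCsew : 0 ≤ Csew)
    (hY : ∀ s t : ℝ, 0 < s → s < t → t ≤ T →
      |Y t - Y s| ≤ CY * s ^ (η₁ - α₁) * (t - s) ^ α₁)
    (hX : ∀ s t : ℝ, 0 < s → s < t → t ≤ T →
      |X t - X s| ≤ CX * s ^ (η₂ - α₂) * (t - s) ^ α₂)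
    (hadd : ∀ s u t : ℝ, 0 < s → s ≤ u → u ≤ t → t ≤ T → I s u + I u t = I s t)
    (hsew : ∀ s t : ℝ, 0 < s → s < t → t ≤ T →
      |I s t - Y s * (X t - X s)| ≤
        Csew * (CX * s ^ (η₂ - α₂)) * (CY * s ^ (η₁ - α₁)) * (t - s) ^ (α₁ + α₂)) :
    ∀ t : ℝ, 0 < t → t ≤ T →
      ∃ L : ℝ, Tendsto (fun ε => I ε t) (nhdsWithin 0 (Ioi 0)) (nhds L) := by
  intro t ht htT
  set δ : ℝ := min η₂ (η₁ + η₂) with hδdef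
  have hδ : 0 < δ := lt_min hη₂ hη₁₂
  -- doubling estimate for Y
  have hYstep : ∀ s : ℝ, 0 < s → s < T →
      |Y (min (2*s) T) - Y s| ≤ CY * s ^ η₁ := by
    intro s hs hsT
    have h2s : s < min (2*s) T := lt_min (by linarith) hsT
    have hmT : min (2*s) T ≤ T := min_le_right _ _
    have h1 := hY s (min (2*s) T) hs h2s hmT
    have hdiff : min (2*s) T - s ≤ s := by
      have := min_le_left (2*s) T; linarith
    have hdpos : 0 < min (2*s) T - s := by linarith
    have h2 : (min (2*s) T - s) ^ α₁ ≤ s ^ α₁ :=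
      Real.rpow_le_rpow (le_of_lt hdpos) hdiff (le_of_lt hα₁)
    calc |Y (min (2*s) T) - Y s| ≤ CY * s ^ (η₁ - α₁) * (min (2*s) T - s) ^ α₁ := h1
      _ ≤ CY * s ^ (η₁ - α₁) * s ^ α₁ := by
          apply mul_le_mul_of_nonneg_left h2
          positivity
      _ = CY * s ^ η₁ := by
          rw [mul_assoc, ← Real.rpow_add hs]; ring_nf
  -- Step 1: bound |Y s| ≤ A + B s^η₁
  obtain ⟨A, B, hA, hB, hYb⟩ :
      ∃ A B : ℝ, 0 ≤ A ∧ 0 ≤ B ∧ ∀ s : ℝ, 0 < s → s ≤ T → |Y s| ≤ A + B * s ^ η₁ := by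
    rcases lt_or_gt_of_ne hη₁ with hneg | hpos
    · -- η₁ < 0
      have h2η : (2:ℝ) ^ η₁ < 1 := Real.rpow_lt_one_of_one_lt_of_neg one_lt_two hneg
      have h2η' : (0:ℝ) < 2 ^ η₁ := Real.rpow_pos_of_pos two_pos _
      have h1m : (0:ℝ) < 1 - 2 ^ η₁ := by linarith
      obtain ⟨c, hc⟩ : ∃ c : ℝ, c = |Y T| * T ^ (-η₁) + CY / (1 - 2 ^ η₁) := ⟨_, rfl⟩
      have hdiv0 : 0 ≤ CY / (1 - 2 ^ η₁) := div_nonneg hCY h1m.le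
      have hc0 : 0 ≤ c := by
        have h : (0:ℝ) ≤ |Y T| * T ^ (-η₁) := by positivity
        rw [hc]; linarith
      have hTpow : |Y T| * T ^ (-η₁) * T ^ η₁ = |Y T| := by
        rw [mul_assoc, ← Real.rpow_add hT]; simp
      have hbase : ∀ s : ℝ, s = T → |Y s| ≤ c * s ^ η₁ := by
        intro s hEq; subst hEq
        have hspow : (0:ℝ) < s ^ η₁ := Real.rpow_pos_of_pos hT _
        have : 0 ≤ CY / (1 - 2 ^ η₁) * s ^ η₁ := mul_nonneg hdiv0 hspow.le
        calc |Y s| = |Y s| * s ^ (-η₁) * s ^ η₁ := by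
              rw [mul_assoc, ← Real.rpow_add hT]; simp
          _ ≤ c * s ^ η₁ := by rw [hc, add_mul]; linarith
      have key : ∀ n : ℕ, ∀ s : ℝ, 0 < s → s ≤ T → T ≤ 2 ^ n * s → |Y s| ≤ c * s ^ η₁ := by
        intro n
        induction n with
        | zero =>
          intro s hs hsT hTs
          exact hbase s (le_antisymm hsT (by simpa using hTs))
        | succ n ih =>
          intro s hs hsT hTs
          rcases eq_or_lt_of_le hsT with hEq | hlt
          · exact hbase s hEq
          · have hspow : (0:ℝ) < s ^ η₁ := Real.rpow_pos_of_pos hs _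
            have hstep := hYstep s hs hlt
            have hu : |Y (min (2*s) T)| ≤ (c - CY) * s ^ η₁ := by
              rcases le_or_gt (2*s) T with h2T | h2T
              · rw [min_eq_left h2T]
                have hih := ih (2*s) (by linarith) h2T (by rw [pow_succ] at hTs; linarith)
                have hmul : (2*s) ^ η₁ = 2 ^ η₁ * s ^ η₁ :=
                  Real.mul_rpow (by norm_num) (le_of_lt hs)
                have hCYle : CY ≤ c * (1 - 2 ^ η₁) := by
                  have h1 : 0 ≤ |Y T| * T ^ (-η₁) * (1 - 2 ^ η₁) := by
                    apply mul_nonneg (by positivity) h1m.le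
                  have h2 : CY / (1 - 2 ^ η₁) * (1 - 2 ^ η₁) = CY :=
                    div_mul_cancel₀ _ (ne_of_gt h1m)
                  rw [hc]; nlinarith
                calc |Y (2*s)| ≤ c * (2*s) ^ η₁ := hih
                  _ = c * 2 ^ η₁ * s ^ η₁ := by rw [hmul]; ring
                  _ ≤ (c - CY) * s ^ η₁ := by nlinarith
              · rw [min_eq_right (le_of_lt h2T)]
                have hTη : T ^ η₁ ≤ s ^ η₁ :=
                  Real.rpow_le_rpow_of_nonpos hs hsT (le_of_lt hneg)
                have hYT : |Y T| ≤ |Y T| * T ^ (-η₁) * s ^ η₁ := by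
                  calc |Y T| = |Y T| * T ^ (-η₁) * T ^ η₁ := hTpow.symm
                    _ ≤ |Y T| * T ^ (-η₁) * s ^ η₁ := by
                        apply mul_le_mul_of_nonneg_left hTη; positivity
                have hfrac : CY ≤ CY / (1 - 2 ^ η₁) := by
                  rw [le_div_iff₀ h1m]
                  nlinarith [mul_nonneg hCY h2η'.le]
                have hmn : 0 ≤ (CY / (1 - 2 ^ η₁) - CY) * s ^ η₁ :=
                  mul_nonneg (by linarith) hspow.le
                have hsplit : (c - CY) * s ^ η₁ =
                    |Y T| * T ^ (-η₁) * s ^ η₁ + (CY / (1 - 2 ^ η₁) - CY) * s ^ η₁ := by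
                  rw [hc]; ring
                linarith
            have htri : |Y s| ≤ |Y (min (2*s) T)| + |Y (min (2*s) T) - Y s| := by
              have h := abs_sub_abs_le_abs_sub (Y s) (Y (min (2*s) T))
              rw [abs_sub_comm] at h; linarith
            calc |Y s| ≤ (c - CY) * s ^ η₁ + CY * s ^ η₁ := by linarith
              _ = c * s ^ η₁ := by ring
      refine ⟨0, c, le_refl 0, hc0, fun s hs hsT => ?_⟩
      obtain ⟨n, hn⟩ := pow_unbounded_of_one_lt (T / s) (one_lt_two (α := ℝ))
      have := key n s hs hsT (by rw [div_lt_iff₀ hs] at hn; linarith)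
      linarith
    · -- η₁ > 0
      have h2η : (1:ℝ) < 2 ^ η₁ := by
        rw [Real.one_lt_rpow_iff_of_pos two_pos]; left; exact ⟨one_lt_two, hpos⟩
      have h1m : (0:ℝ) < 2 ^ η₁ - 1 := by linarith
      obtain ⟨c, hc⟩ : ∃ c : ℝ, c = CY * 2 ^ η₁ / (2 ^ η₁ - 1) := ⟨_, rfl⟩
      have hc0 : 0 ≤ c := hc ▸ div_nonneg (by positivity) h1m.le
      have hcCY : c - CY = CY / (2 ^ η₁ - 1) := by
        rw [hc]; field_simp; ring
      have hcCY0 : 0 ≤ c - CY := by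
        rw [hcCY]; exact div_nonneg hCY h1m.le
      have hbase : ∀ s : ℝ, s = T →
          |Y s| ≤ |Y T| + c * T ^ η₁ - (c - CY) * s ^ η₁ := by
        intro s hEq; subst hEq
        have hspow : (0:ℝ) < s ^ η₁ := Real.rpow_pos_of_pos hT _
        have hsplit : c * s ^ η₁ - (c - CY) * s ^ η₁ = CY * s ^ η₁ := by ring
        linarith [mul_nonneg hCY hspow.le]
      have key : ∀ n : ℕ, ∀ s : ℝ, 0 < s → s ≤ T → T ≤ 2 ^ n * s →
          |Y s| ≤ |Y T| + c * T ^ η₁ - (c - CY) * s ^ η₁ := by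
        intro n
        induction n with
        | zero =>
          intro s hs hsT hTs
          exact hbase s (le_antisymm hsT (by simpa using hTs))
        | succ n ih =>
          intro s hs hsT hTs
          rcases eq_or_lt_of_le hsT with hEq | hlt
          · exact hbase s hEq
          · have hspow : (0:ℝ) < s ^ η₁ := Real.rpow_pos_of_pos hs _
            have hstep := hYstep s hs hlt
            have hu : |Y (min (2*s) T)| ≤ |Y T| + c * T ^ η₁ - c * s ^ η₁ := by
              rcases le_or_gt (2*s) T with h2T | h2T
              · rw [min_eq_left h2T]
                have hih := ih (2*s) (by linarith) h2T (by rw [pow_succ] at hTs; linarith)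
                have hmul : (2*s) ^ η₁ = 2 ^ η₁ * s ^ η₁ :=
                  Real.mul_rpow (by norm_num) (le_of_lt hs)
                have hgeom : c ≤ (c - CY) * 2 ^ η₁ := by
                  have h1 : (c - CY) * (2 ^ η₁ - 1) = CY := by
                    rw [hcCY]; field_simp
                  nlinarith [h1]
                calc |Y (2*s)| ≤ |Y T| + c * T ^ η₁ - (c - CY) * (2 ^ η₁ * s ^ η₁) := by
                      rw [← hmul]; exact hih
                  _ ≤ |Y T| + c * T ^ η₁ - c * s ^ η₁ := by nlinarith
              · rw [min_eq_right (le_of_lt h2T)]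
                have hTη : s ^ η₁ ≤ T ^ η₁ := Real.rpow_le_rpow hs.le hsT hpos.le
                nlinarith [mul_nonneg hc0 (sub_nonneg.2 hTη)]
            have htri : |Y s| ≤ |Y (min (2*s) T)| + |Y (min (2*s) T) - Y s| := by
              have h := abs_sub_abs_le_abs_sub (Y s) (Y (min (2*s) T))
              rw [abs_sub_comm] at h; linarith
            calc |Y s| ≤ (|Y T| + c * T ^ η₁ - c * s ^ η₁) + CY * s ^ η₁ := by linarith
              _ = |Y T| + c * T ^ η₁ - (c - CY) * s ^ η₁ := by ring
      refine ⟨|Y T| + c * T ^ η₁, 0, ?_, le_refl 0, fun s hs hsT => ?_⟩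
      · have : (0:ℝ) < T ^ η₁ := Real.rpow_pos_of_pos hT _
        nlinarith [abs_nonneg (Y T)]
      · obtain ⟨n, hn⟩ := pow_unbounded_of_one_lt (T / s) (one_lt_two (α := ℝ))
        have hk := key n s hs hsT (by rw [div_lt_iff₀ hs] at hn; linarith)
        have hspow : (0:ℝ) < s ^ η₁ := Real.rpow_pos_of_pos hs _
        nlinarith [mul_nonneg hcCY0 hspow.le]
  -- Step 2: local bound on I over doubling intervals
  obtain ⟨D, hD⟩ : ∃ D : ℝ,
      D = A * CX * T ^ (η₂ - δ) + (B + Csew * CY) * CX * T ^ (η₁ + η₂ - δ) := ⟨_, rfl⟩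
  have he1 : 0 ≤ η₂ - δ := by
    have h := min_le_left η₂ (η₁ + η₂); rw [← hδdef] at h; linarith
  have he2 : 0 ≤ η₁ + η₂ - δ := by
    have h := min_le_right η₂ (η₁ + η₂); rw [← hδdef] at h; linarith
  have hT1 : (0:ℝ) ≤ T ^ (η₂ - δ) := (Real.rpow_pos_of_pos hT _).le
  have hT2 : (0:ℝ) ≤ T ^ (η₁ + η₂ - δ) := (Real.rpow_pos_of_pos hT _).le
  have hD0 : 0 ≤ D := by
    rw [hD]
    have h1 : 0 ≤ A * CX * T ^ (η₂ - δ) := mul_nonneg (mul_nonneg hA hCX) hT1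
    have h2 : 0 ≤ (B + Csew * CY) * CX * T ^ (η₁ + η₂ - δ) :=
      mul_nonneg (mul_nonneg (add_nonneg hB (mul_nonneg hCsew hCY)) hCX) hT2
    linarith
  have hDb : ∀ s u : ℝ, 0 < s → s < u → u ≤ 2*s → u ≤ T → |I s u| ≤ D * s ^ δ := by
    intro s u hs hsu hu2 huT
    have hsT' : s ≤ T := le_trans (le_of_lt hsu) huT
    have hd0 : 0 < u - s := by linarith
    have hds : u - s ≤ s := by linarith
    have h1 := hsew s u hs hsu huT
    have h2 := hX s u hs hsu huT
    have hYs := hYb s hs hsT'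
    have hsp1 : (0:ℝ) ≤ s ^ (η₂ - α₂) := (Real.rpow_pos_of_pos hs _).le
    have hsp2 : (0:ℝ) ≤ s ^ (η₁ - α₁) := (Real.rpow_pos_of_pos hs _).le
    have hsη₁ : (0:ℝ) ≤ s ^ η₁ := (Real.rpow_pos_of_pos hs _).le
    have hsδ : (0:ℝ) ≤ s ^ δ := (Real.rpow_pos_of_pos hs _).le
    have hAB0 : 0 ≤ A + B * s ^ η₁ := add_nonneg hA (mul_nonneg hB hsη₁)
    have hC1 : 0 ≤ Csew * (CX * s ^ (η₂ - α₂)) * (CY * s ^ (η₁ - α₁)) :=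
      mul_nonneg (mul_nonneg hCsew (mul_nonneg hCX hsp1)) (mul_nonneg hCY hsp2)
    -- triangle inequality
    have htri : |I s u| ≤ |I s u - Y s * (X u - X s)| + |Y s| * |X u - X s| := by
      calc |I s u| = |(I s u - Y s * (X u - X s)) + Y s * (X u - X s)| := by ring_nf
        _ ≤ |I s u - Y s * (X u - X s)| + |Y s * (X u - X s)| := abs_add_le _ _
        _ = |I s u - Y s * (X u - X s)| + |Y s| * |X u - X s| := by rw [abs_mul]
    have hprod : |Y s| * |X u - X s| ≤
        (A + B * s ^ η₁) * (CX * s ^ (η₂ - α₂) * (u - s) ^ α₂) :=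
      mul_le_mul hYs h2 (abs_nonneg _) hAB0
    -- power comparisons
    have hp1 : (u - s) ^ (α₁ + α₂) ≤ s ^ (α₁ + α₂) :=
      Real.rpow_le_rpow hd0.le hds (by linarith)
    have hp2 : (u - s) ^ α₂ ≤ s ^ α₂ := Real.rpow_le_rpow hd0.le hds hα₂.le
    have hpow3 : s ^ η₂ ≤ T ^ (η₂ - δ) * s ^ δ := by
      have hq : s ^ η₂ = s ^ (η₂ - δ) * s ^ δ := by
        rw [← Real.rpow_add hs]; ring_nf
      rw [hq]
      exact mul_le_mul_of_nonneg_right (Real.rpow_le_rpow hs.le hsT' he1) hsδ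
    have hpow4 : s ^ (η₁ + η₂) ≤ T ^ (η₁ + η₂ - δ) * s ^ δ := by
      have hq : s ^ (η₁ + η₂) = s ^ (η₁ + η₂ - δ) * s ^ δ := by
        rw [← Real.rpow_add hs]; ring_nf
      rw [hq]
      exact mul_le_mul_of_nonneg_right (Real.rpow_le_rpow hs.le hsT' he2) hsδ
    -- first term
    have q1 : Csew * (CX * s ^ (η₂ - α₂)) * (CY * s ^ (η₁ - α₁)) * (u - s) ^ (α₁ + α₂)
        ≤ Csew * CX * CY * (T ^ (η₁ + η₂ - δ) * s ^ δ) := by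
      calc Csew * (CX * s ^ (η₂ - α₂)) * (CY * s ^ (η₁ - α₁)) * (u - s) ^ (α₁ + α₂)
          ≤ Csew * (CX * s ^ (η₂ - α₂)) * (CY * s ^ (η₁ - α₁)) * s ^ (α₁ + α₂) :=
            mul_le_mul_of_nonneg_left hp1 hC1
        _ = Csew * CX * CY * (s ^ (η₂ - α₂) * s ^ (η₁ - α₁) * s ^ (α₁ + α₂)) := by ring
        _ = Csew * CX * CY * s ^ (η₁ + η₂) := by
            rw [← Real.rpow_add hs, ← Real.rpow_add hs,
              show η₂ - α₂ + (η₁ - α₁) + (α₁ + α₂) = η₁ + η₂ by ring]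
        _ ≤ Csew * CX * CY * (T ^ (η₁ + η₂ - δ) * s ^ δ) :=
            mul_le_mul_of_nonneg_left hpow4
              (mul_nonneg (mul_nonneg hCsew hCX) hCY)
    -- second term
    have q2 : (A + B * s ^ η₁) * (CX * s ^ (η₂ - α₂) * (u - s) ^ α₂)
        ≤ A * CX * (T ^ (η₂ - δ) * s ^ δ) + B * CX * (T ^ (η₁ + η₂ - δ) * s ^ δ) := by
      have hmid : (A + B * s ^ η₁) * (CX * s ^ (η₂ - α₂) * (u - s) ^ α₂)
          ≤ (A + B * s ^ η₁) * (CX * s ^ (η₂ - α₂) * s ^ α₂) := by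
        apply mul_le_mul_of_nonneg_left _ hAB0
        apply mul_le_mul_of_nonneg_left hp2 (mul_nonneg hCX hsp1)
      have heq1 : (A + B * s ^ η₁) * (CX * s ^ (η₂ - α₂) * s ^ α₂)
          = A * CX * s ^ η₂ + B * CX * (s ^ η₁ * s ^ η₂) := by
        rw [show CX * s ^ (η₂ - α₂) * s ^ α₂ = CX * (s ^ (η₂ - α₂) * s ^ α₂) by ring,
          ← Real.rpow_add hs, show η₂ - α₂ + α₂ = η₂ by ring]
        ring
      have heq2 : s ^ η₁ * s ^ η₂ = s ^ (η₁ + η₂) := (Real.rpow_add hs _ _).symm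
      have h3 : A * CX * s ^ η₂ ≤ A * CX * (T ^ (η₂ - δ) * s ^ δ) :=
        mul_le_mul_of_nonneg_left hpow3 (mul_nonneg hA hCX)
      have h4 : B * CX * s ^ (η₁ + η₂) ≤ B * CX * (T ^ (η₁ + η₂ - δ) * s ^ δ) :=
        mul_le_mul_of_nonneg_left hpow4 (mul_nonneg hB hCX)
      rw [heq1, heq2] at hmid
      linarith
    have hfinal : Csew * CX * CY * (T ^ (η₁ + η₂ - δ) * s ^ δ)
        + (A * CX * (T ^ (η₂ - δ) * s ^ δ) + B * CX * (T ^ (η₁ + η₂ - δ) * s ^ δ))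
        = D * s ^ δ := by rw [hD]; ring
    linarith
  -- Step 3: I ε ε = 0
  have hI0 : ∀ ε : ℝ, 0 < ε → ε ≤ T → I ε ε = 0 := by
    intro ε h h'
    have := hadd ε ε ε h le_rfl le_rfl h'
    linarith
  -- Step 4: telescoping bound
  have h2δ : (1:ℝ) < 2 ^ δ := by
    rw [Real.one_lt_rpow_iff_of_pos two_pos]; left; exact ⟨one_lt_two, hδ⟩
  have h2δ' : (0:ℝ) < 2 ^ δ - 1 := by linarith
  obtain ⟨K, hK⟩ : ∃ K : ℝ, K = D * (1 + 1/(2 ^ δ - 1)) := ⟨_, rfl⟩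
  have hKD : D ≤ K := by
    have h0 : 0 ≤ D * (1/(2 ^ δ - 1)) := mul_nonneg hD0 (by positivity)
    rw [hK]; nlinarith [h0]
  have hK0 : 0 ≤ K := le_trans hD0 hKD
  have hKstep : ∀ x : ℝ, 0 ≤ x → (K + D) * (x/2) ^ δ ≤ K * x ^ δ := by
    intro x hx
    have h2p : (0:ℝ) < 2 ^ δ := Real.rpow_pos_of_pos two_pos δ
    have hhalf : (x/2) ^ δ = x ^ δ / 2 ^ δ := Real.div_rpow hx (by norm_num) δ
    have hxp : 0 ≤ x ^ δ := Real.rpow_nonneg hx δ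
    have hKK : K + D ≤ K * 2 ^ δ := by
      have hcomp : K * (2 ^ δ - 1) = D * (2 ^ δ - 1) + D := by
        rw [hK]; field_simp
      nlinarith [mul_nonneg hD0 h2δ'.le]
    have hmm : (K + D) * (x ^ δ / 2 ^ δ) = ((K + D) * x ^ δ) / 2 ^ δ := by ring
    rw [hhalf, hmm, div_le_iff₀ h2p]
    nlinarith [mul_le_mul_of_nonneg_right hKK hxp]
  have key : ∀ n : ℕ, ∀ a b : ℝ, 0 < a → a ≤ b → b ≤ T → b ≤ 2 ^ n * a →
      |I a b| ≤ K * b ^ δ := by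
    intro n
    induction n with
    | zero =>
      intro a b ha hab hbT hb2
      have hba : b = a := le_antisymm (by simpa using hb2) hab
      subst hba
      rw [hI0 b (lt_of_lt_of_le ha le_rfl) hbT, abs_zero]
      exact mul_nonneg hK0 (Real.rpow_pos_of_pos ha δ).le
    | succ n ih =>
      intro a b ha hab hbT hb2
      rcases le_or_gt b (2*a) with hb2a | hb2a
      · rcases eq_or_lt_of_le hab with hEq | hlt
        · subst hEq
          rw [hI0 a ha hbT, abs_zero]
          exact mul_nonneg hK0 (Real.rpow_pos_of_pos ha δ).le
        · have hIb := hDb a b ha hlt hb2a hbT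
          have hpow : a ^ δ ≤ b ^ δ := Real.rpow_le_rpow ha.le hab hδ.le
          have : D * a ^ δ ≤ K * b ^ δ :=
            mul_le_mul hKD hpow (Real.rpow_pos_of_pos ha δ).le hK0
          linarith
      · have hmid1 : a ≤ b/2 := by linarith
        have hmid2 : b/2 ≤ T := by linarith
        have hmidpos : (0:ℝ) < b/2 := by linarith
        have hsplit := hadd a (b/2) b ha hmid1 (by linarith) hbT
        have h1 := ih a (b/2) ha hmid1 hmid2 (by rw [pow_succ] at hb2; linarith)
        have h2 := hDb (b/2) b hmidpos (by linarith) (by linarith) hbT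
        have htri : |I a b| ≤ |I a (b/2)| + |I (b/2) b| := by
          rw [← hsplit]; exact abs_add_le _ _
        have hfin := hKstep b (by linarith : (0:ℝ) ≤ b)
        linarith
  have hKall : ∀ a b : ℝ, 0 < a → a ≤ b → b ≤ T → |I a b| ≤ K * b ^ δ := by
    intro a b ha hab hbT
    obtain ⟨n, hn⟩ := pow_unbounded_of_one_lt (b / a) (one_lt_two (α := ℝ))
    exact key n a b ha hab hbT (by rw [div_lt_iff₀ ha] at hn; linarith)
  -- Step 5: Cauchy
  have hcauchy : Cauchy (map (fun ε => I ε t) (nhdsWithin 0 (Ioi 0))) := by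
    rw [Metric.cauchy_iff]
    constructor
    · exact map_neBot
    · intro r hr
      have hK1 : (0:ℝ) < K + 1 := by linarith
      obtain ⟨η, hη0, hηt, hηr⟩ : ∃ η : ℝ, 0 < η ∧ η ≤ t ∧ K * η ^ δ < r := by
        have hrK : (0:ℝ) < r / (K+1) := by positivity
        refine ⟨min t ((r/(K+1)) ^ (1/δ)), lt_min ht (Real.rpow_pos_of_pos hrK _),
          min_le_left _ _, ?_⟩
        have h0 : (0:ℝ) < min t ((r/(K+1)) ^ (1/δ)) :=
          lt_min ht (Real.rpow_pos_of_pos hrK _)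
        have h2 : (min t ((r/(K+1)) ^ (1/δ))) ^ δ ≤ ((r/(K+1)) ^ (1/δ)) ^ δ :=
          Real.rpow_le_rpow h0.le (min_le_right _ _) hδ.le
        have h3 : ((r/(K+1)) ^ (1/δ)) ^ δ = r/(K+1) := by
          rw [← Real.rpow_mul hrK.le, one_div_mul_cancel (ne_of_gt hδ), Real.rpow_one]
        have h4 : K * (r/(K+1)) < r := by
          have he : K * (r/(K+1)) = r * K / (K+1) := by ring
          rw [he, div_lt_iff₀ hK1]
          nlinarith
        calc K * (min t ((r/(K+1)) ^ (1/δ))) ^ δ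
            ≤ K * (((r/(K+1)) ^ (1/δ)) ^ δ) := mul_le_mul_of_nonneg_left h2 hK0
          _ = K * (r/(K+1)) := by rw [h3]
          _ < r := h4
      refine ⟨(fun ε => I ε t) '' (Ioo 0 η),
        image_mem_map (Ioo_mem_nhdsGT_of_mem ⟨le_rfl, hη0⟩), ?_⟩
      rintro x ⟨a, ⟨ha0, haη⟩, rfl⟩ y ⟨b, ⟨hb0, hbη⟩, rfl⟩
      have main : ∀ p q : ℝ, 0 < p → p ≤ q → q < η → |I p t - I q t| < r := by
        intro p q hp hpq hqη
        have hqt : q ≤ t := le_trans (le_of_lt hqη) hηt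
        have hqT : q ≤ T := le_trans hqt htT
        have heq : I p t - I q t = I p q := by
          have := hadd p q t hp hpq hqt htT; linarith
        rw [heq]
        have hc1 := hKall p q hp hpq hqT
        have hc2 : q ^ δ ≤ η ^ δ :=
          Real.rpow_le_rpow (le_trans hp.le hpq) (le_of_lt hqη) hδ.le
        have := mul_le_mul_of_nonneg_left hc2 hK0
        linarith
      rcases le_total a b with hab | hab
      · rw [Real.dist_eq]; exact main a b ha0 hab hbη
      · rw [Real.dist_eq, abs_sub_comm]; exact main b a hb0 hab haη
  obtain ⟨L, hL⟩ := CompleteSpace.complete hcauchy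
  exact ⟨L, hL⟩
end

section
/- With the hypotheses of the improper Young integral theorem (α₁+α₂>1, η₂>0, η₁+η₂>0, η₁≠0), the function t ↦ ∫_{0⁺}^t Y_r dX_r belongs to the singular Hölder space C^{α₂,η}((0,T]) with η = (η₁ ∧ 0) + η₂ > 0, and there is a constant M (depending on T and the parameters) such that ‖∫_{0⁺}^· Y dX‖_{α₂,η} ≤ M (|Y_T| + ‖Y‖_{α₁,η₁}) ‖X‖_{α₂,η₂}. -/
open Set Filter

open Real in
section
open Real

private lemma chain_neg {T α₁ η₁ CY : ℝ} {Y : ℝ → ℝ}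
    (hα₁ : 0 < α₁) (hη₁ : η₁ < 0) (hCY : 0 ≤ CY)
    (hY : ∀ s t : ℝ, 0 < s → s < t → t ≤ T →
      |Y t - Y s| ≤ CY * s ^ (η₁ - α₁) * (t - s) ^ α₁) :
    ∀ n : ℕ, ∀ s u : ℝ, 0 < s → s < u → u ≤ T → u ≤ 2 ^ n * s →
      |Y u - Y s| ≤ (1 - (2:ℝ) ^ η₁)⁻¹ * CY * s ^ η₁ := by
  have hp0 : (0:ℝ) < (2:ℝ) ^ η₁ := Real.rpow_pos_of_pos two_pos _
  have hp1 : (2:ℝ) ^ η₁ < 1 := Real.rpow_lt_one_of_one_lt_of_neg one_lt_two hη₁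
  set p := (2:ℝ) ^ η₁ with hp
  set K := (1 - p)⁻¹ with hK
  have hKpos : 0 < K := inv_pos.mpr (by linarith)
  have hK1 : 1 ≤ K := by
    rw [hK, le_inv_comm₀ one_pos (by linarith)]; linarith
  have hKfix : K * p + 1 = K := by
    have : K * (1 - p) = 1 := inv_mul_cancel₀ (by linarith)
    nlinarith
  intro n
  induction n with
  | zero =>
    intro s u hs hsu huT hle
    simp only [pow_zero, one_mul] at hle; linarith
  | succ n ih =>
    intro s u hs hsu huT hle
    have hsη : (0:ℝ) ≤ s ^ η₁ := (Real.rpow_pos_of_pos hs _).le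
    by_cases h2 : u ≤ 2 * s
    · have h1 := hY s u hs hsu huT
      have h3 : (u - s) ^ α₁ ≤ s ^ α₁ :=
        Real.rpow_le_rpow (by linarith) (by linarith) hα₁.le
      have h4 : CY * s ^ (η₁ - α₁) * (u - s) ^ α₁ ≤ CY * s ^ (η₁ - α₁) * s ^ α₁ := by
        have := (Real.rpow_pos_of_pos hs (η₁ - α₁)).le
        exact mul_le_mul_of_nonneg_left h3 (by positivity)
      have h5 : CY * s ^ (η₁ - α₁) * s ^ α₁ = CY * s ^ η₁ := by
        rw [mul_assoc, ← Real.rpow_add hs]; ring_nf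
      have : |Y u - Y s| ≤ CY * s ^ η₁ := by linarith
      calc |Y u - Y s| ≤ CY * s ^ η₁ := this
        _ = 1 * (CY * s ^ η₁) := by ring
        _ ≤ K * (CY * s ^ η₁) := by
            apply mul_le_mul_of_nonneg_right hK1 (by positivity)
        _ = K * CY * s ^ η₁ := by ring
    · push_neg at h2
      have hs2T : 2 * s ≤ T := by linarith
      have h1 : |Y (2*s) - Y s| ≤ CY * s ^ η₁ := by
        have := hY s (2*s) hs (by linarith) hs2T
        have heq : (2*s - s) = s := by ring
        rw [heq] at this
        calc |Y (2*s) - Y s| ≤ CY * s ^ (η₁ - α₁) * s ^ α₁ := this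
          _ = CY * s ^ η₁ := by rw [mul_assoc, ← Real.rpow_add hs]; ring_nf
      have h2' : |Y u - Y (2*s)| ≤ K * CY * (2*s) ^ η₁ := by
        apply ih (2*s) u (by linarith) h2 huT
        calc u ≤ 2 ^ (n+1) * s := hle
          _ = 2 ^ n * (2 * s) := by ring
      have h3 : (2*s) ^ η₁ = p * s ^ η₁ := by
        rw [hp, Real.mul_rpow (by norm_num) hs.le]
      calc |Y u - Y s| = |(Y u - Y (2*s)) + (Y (2*s) - Y s)| := by ring_nf
        _ ≤ |Y u - Y (2*s)| + |Y (2*s) - Y s| := abs_add_le _ _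
        _ ≤ K * CY * (2*s) ^ η₁ + CY * s ^ η₁ := by linarith
        _ = (K * p + 1) * (CY * s ^ η₁) := by rw [h3]; ring
        _ = K * (CY * s ^ η₁) := by rw [hKfix]
        _ = K * CY * s ^ η₁ := by ring

private lemma chain_pos {T α₁ η₁ CY : ℝ} {Y : ℝ → ℝ}
    (hα₁ : 0 < α₁) (hη₁ : 0 < η₁) (hη₁α : η₁ ≤ α₁) (hCY : 0 ≤ CY)
    (hY : ∀ s t : ℝ, 0 < s → s < t → t ≤ T →
      |Y t - Y s| ≤ CY * s ^ (η₁ - α₁) * (t - s) ^ α₁) :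
    ∀ n : ℕ, ∀ s u : ℝ, 0 < s → s < u → u ≤ T → u ≤ 2 ^ n * s →
      |Y u - Y s| ≤ ((2:ℝ) ^ η₁ - 1)⁻¹ * CY * u ^ η₁ := by
  have hp1 : (1:ℝ) < (2:ℝ) ^ η₁ := Real.one_lt_rpow_iff_of_pos two_pos |>.mpr (Or.inl ⟨one_lt_two, hη₁⟩)
  set p := (2:ℝ) ^ η₁ with hp
  set K := (p - 1)⁻¹ with hK
  have hKpos : 0 < K := inv_pos.mpr (by linarith)
  -- key local bound: if s < u ≤ 2 s then |Y u - Y s| ≤ CY * (u/2) ^ η₁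
  have hloc : ∀ s u : ℝ, 0 < s → s < u → u ≤ T → u ≤ 2 * s →
      |Y u - Y s| ≤ CY * (u/2) ^ η₁ := by
    intro s u hs hsu huT h2
    have hu2 : (0:ℝ) < u / 2 := by linarith
    have h1 := hY s u hs hsu huT
    have h3 : s ^ (η₁ - α₁) ≤ (u/2) ^ (η₁ - α₁) :=
      Real.rpow_le_rpow_of_nonpos hu2 (by linarith) (by linarith)
    have h4 : (u - s) ^ α₁ ≤ (u/2) ^ α₁ :=
      Real.rpow_le_rpow (by linarith) (by linarith) hα₁.le
    have h5 : CY * s ^ (η₁ - α₁) * (u - s) ^ α₁ ≤ CY * (u/2) ^ (η₁ - α₁) * (u/2) ^ α₁ := by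
      apply mul_le_mul (mul_le_mul_of_nonneg_left h3 hCY) h4
        (Real.rpow_nonneg (by linarith) _)
      positivity
    have h6 : CY * (u/2) ^ (η₁ - α₁) * (u/2) ^ α₁ = CY * (u/2) ^ η₁ := by
      rw [mul_assoc, ← Real.rpow_add hu2]; ring_nf
    linarith
  have hfix : (K + 1) * ((1:ℝ)/p) = K := by
    have hpne : p - 1 ≠ 0 := by linarith
    have : K * (p - 1) = 1 := inv_mul_cancel₀ hpne
    field_simp
    nlinarith
  intro n
  induction n with
  | zero =>
    intro s u hs hsu huT hle
    simp only [pow_zero, one_mul] at hle; linarith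
  | succ n ih =>
    intro s u hs hsu huT hle
    have hu : 0 < u := lt_trans hs hsu
    have huη : (0:ℝ) ≤ u ^ η₁ := (Real.rpow_pos_of_pos hu _).le
    have hhalf : (u/2) ^ η₁ = u ^ η₁ / p := by
      rw [hp, Real.div_rpow hu.le (by norm_num)]
    by_cases h2 : u ≤ 2 * s
    · have h1 := hloc s u hs hsu huT h2
      have : CY * (u/2) ^ η₁ ≤ K * CY * u ^ η₁ := by
        rw [hhalf]
        rw [div_eq_mul_inv]
        have hpinv : p⁻¹ ≤ K := by
          rw [hK]
          apply inv_anti₀ (by linarith) (by linarith)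
        calc CY * (u ^ η₁ * p⁻¹) = (CY * u ^ η₁) * p⁻¹ := by ring
          _ ≤ (CY * u ^ η₁) * K := mul_le_mul_of_nonneg_left hpinv (by positivity)
          _ = K * CY * u ^ η₁ := by ring
      linarith
    · push_neg at h2
      have hm : 0 < u / 2 := by linarith
      have hsm : s < u / 2 := by linarith
      have hmT : u / 2 ≤ T := by linarith
      have h1 : |Y u - Y (u/2)| ≤ CY * (u/2) ^ η₁ := by
        apply hloc (u/2) u hm (by linarith) huT (by linarith)
      have h2' : |Y (u/2) - Y s| ≤ K * CY * (u/2) ^ η₁ := by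
        apply ih s (u/2) hs hsm hmT
        have : (2:ℝ) ^ (n+1) * s = 2 * (2 ^ n * s) := by ring
        linarith [hle, this ▸ hle]
      calc |Y u - Y s| = |(Y u - Y (u/2)) + (Y (u/2) - Y s)| := by ring_nf
        _ ≤ |Y u - Y (u/2)| + |Y (u/2) - Y s| := abs_add_le _ _
        _ ≤ (K + 1) * (CY * (u/2) ^ η₁) := by linarith
        _ = (K + 1) * (1/p) * (CY * u ^ η₁) := by rw [hhalf]; ring
        _ = K * (CY * u ^ η₁) := by rw [hfix]
        _ = K * CY * u ^ η₁ := by ring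

private lemma chain_int {T α₂ η A : ℝ} {I : ℝ → ℝ → ℝ}
    (hα₂ : 0 < α₂) (hη : 0 < η) (hηα : η ≤ α₂) (hA : 0 ≤ A)
    (hadd : ∀ s u t : ℝ, 0 < s → s ≤ u → u ≤ t → t ≤ T → I s u + I u t = I s t)
    (hloc : ∀ s t : ℝ, 0 < s → s < t → t ≤ T → t ≤ 2 * s →
      |I s t| ≤ A * s ^ (η - α₂) * (t - s) ^ α₂) :
    ∀ n : ℕ, ∀ s t : ℝ, 0 < s → s < t → t ≤ T → t ≤ 2 ^ n * s →
      |I s t| ≤ ((2:ℝ) ^ η - 1)⁻¹ * A * t ^ η := by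
  have hp1 : (1:ℝ) < (2:ℝ) ^ η := Real.one_lt_rpow_iff_of_pos two_pos |>.mpr (Or.inl ⟨one_lt_two, hη⟩)
  set p := (2:ℝ) ^ η with hp
  set K := (p - 1)⁻¹ with hK
  have hKpos : 0 < K := inv_pos.mpr (by linarith)
  have hloc2 : ∀ s t : ℝ, 0 < s → s < t → t ≤ T → t ≤ 2 * s →
      |I s t| ≤ A * (t/2) ^ η := by
    intro s t hs hst htT h2
    have ht2 : (0:ℝ) < t / 2 := by linarith
    have h1 := hloc s t hs hst htT h2
    have h3 : s ^ (η - α₂) ≤ (t/2) ^ (η - α₂) :=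
      Real.rpow_le_rpow_of_nonpos ht2 (by linarith) (by linarith)
    have h4 : (t - s) ^ α₂ ≤ (t/2) ^ α₂ :=
      Real.rpow_le_rpow (by linarith) (by linarith) hα₂.le
    have h5 : A * s ^ (η - α₂) * (t - s) ^ α₂ ≤ A * (t/2) ^ (η - α₂) * (t/2) ^ α₂ := by
      apply mul_le_mul (mul_le_mul_of_nonneg_left h3 hA) h4
        (Real.rpow_nonneg (by linarith) _)
      positivity
    have h6 : A * (t/2) ^ (η - α₂) * (t/2) ^ α₂ = A * (t/2) ^ η := by
      rw [mul_assoc, ← Real.rpow_add ht2]; ring_nf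
    linarith
  have hfix : (K + 1) * ((1:ℝ)/p) = K := by
    have hpne : p - 1 ≠ 0 := by linarith
    have : K * (p - 1) = 1 := inv_mul_cancel₀ hpne
    field_simp
    nlinarith
  intro n
  induction n with
  | zero =>
    intro s t hs hst htT hle
    simp only [pow_zero, one_mul] at hle; linarith
  | succ n ih =>
    intro s t hs hst htT hle
    have ht : 0 < t := lt_trans hs hst
    have htη : (0:ℝ) ≤ t ^ η := (Real.rpow_pos_of_pos ht _).le
    have hhalf : (t/2) ^ η = t ^ η / p := by
      rw [hp, Real.div_rpow ht.le (by norm_num)]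
    by_cases h2 : t ≤ 2 * s
    · have h1 := hloc2 s t hs hst htT h2
      have : A * (t/2) ^ η ≤ K * A * t ^ η := by
        rw [hhalf, div_eq_mul_inv]
        have hpinv : p⁻¹ ≤ K := by
          rw [hK]; apply inv_anti₀ (by linarith) (by linarith)
        calc A * (t ^ η * p⁻¹) = (A * t ^ η) * p⁻¹ := by ring
          _ ≤ (A * t ^ η) * K := mul_le_mul_of_nonneg_left hpinv (by positivity)
          _ = K * A * t ^ η := by ring
      linarith
    · push_neg at h2
      have hm : 0 < t / 2 := by linarith
      have hsm : s < t / 2 := by linarith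
      have hmT : t / 2 ≤ T := by linarith
      have hsplit : I s t = I s (t/2) + I (t/2) t :=
        (hadd s (t/2) t hs (by linarith) (by linarith) htT).symm
      have h1 : |I (t/2) t| ≤ A * (t/2) ^ η :=
        hloc2 (t/2) t hm (by linarith) htT (by linarith)
      have h2' : |I s (t/2)| ≤ K * A * (t/2) ^ η := by
        apply ih s (t/2) hs hsm hmT
        have h3 : (2:ℝ) ^ (n+1) * s = 2 * (2 ^ n * s) := by ring
        linarith [hle, h3 ▸ hle]
      calc |I s t| = |I s (t/2) + I (t/2) t| := by rw [hsplit]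
        _ ≤ |I s (t/2)| + |I (t/2) t| := abs_add_le _ _
        _ ≤ (K + 1) * (A * (t/2) ^ η) := by linarith
        _ = (K + 1) * (1/p) * (A * t ^ η) := by rw [hhalf]; ring
        _ = K * (A * t ^ η) := by rw [hfix]
        _ = K * A * t ^ η := by ring

end

set_option maxHeartbeats 1000000 in
/-- Regularity of the improper Young integral: `t ↦ ∫_{0+}^t Y dX` belongs to
`C^{α₂,η}((0,T])` with `η = (η₁ ∧ 0) + η₂ > 0`, with seminorm bound
`‖∫ Y dX‖_{α₂,η} ≤ M (|Y_T| + ‖Y‖_{α₁,η₁}) ‖X‖_{α₂,η₂}`, where `M` depends only on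
`T` and the exponents (and the universal sewing constant `Csew`). -/
theorem improper_young_integral_regularity
    (T α₁ α₂ η₁ η₂ Csew : ℝ) (hT : 0 < T)
    (hα₁ : 0 < α₁) (hα₁' : α₁ < 1) (hα₂ : 0 < α₂) (hα₂' : α₂ < 1)
    (hsum : 1 < α₁ + α₂) (hη₁α : η₁ ≤ α₁) (hη₂α : η₂ ≤ α₂)
    (hη₂ : 0 < η₂) (hη₁₂ : 0 < η₁ + η₂) (hη₁ : η₁ ≠ 0) (hCsew : 0 ≤ Csew) :
    ∃ M : ℝ, 0 < M ∧
      ∀ (Y X : ℝ → ℝ) (I : ℝ → ℝ → ℝ) (Z : ℝ → ℝ) (CY CX : ℝ),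
        0 ≤ CY → 0 ≤ CX →
        (∀ s t : ℝ, 0 < s → s < t → t ≤ T →
          |Y t - Y s| ≤ CY * s ^ (η₁ - α₁) * (t - s) ^ α₁) →
        (∀ s t : ℝ, 0 < s → s < t → t ≤ T →
          |X t - X s| ≤ CX * s ^ (η₂ - α₂) * (t - s) ^ α₂) →
        (∀ s u t : ℝ, 0 < s → s ≤ u → u ≤ t → t ≤ T → I s u + I u t = I s t) →
        (∀ s t : ℝ, 0 < s → s < t → t ≤ T →
          |I s t - Y s * (X t - X s)| ≤
            Csew * (CX * s ^ (η₂ - α₂)) * (CY * s ^ (η₁ - α₁)) * (t - s) ^ (α₁ + α₂)) →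
        (∀ t : ℝ, 0 < t → t ≤ T →
          Tendsto (fun ε => I ε t) (nhdsWithin 0 (Ioi 0)) (nhds (Z t))) →
        ∀ s t : ℝ, 0 < s → s < t → t ≤ T →
          |Z t - Z s| ≤ M * (|Y T| + CY) * CX *
            s ^ ((min η₁ 0 + η₂) - α₂) * (t - s) ^ α₂ := by
  set μ := min η₁ 0 with hμ
  have hμ0 : μ ≤ 0 := min_le_right _ _
  set η := μ + η₂ with hηdef
  have hηpos : 0 < η := by
    rcases lt_or_gt_of_ne hη₁ with h | h
    · have hμe : μ = η₁ := min_eq_left h.le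
      rw [hηdef, hμe]; exact hη₁₂
    · have hμe : μ = 0 := min_eq_right h.le
      rw [hηdef, hμe]; linarith
  have hηα : η ≤ α₂ := by rw [hηdef]; linarith
  have hμ1 : 0 ≤ η₁ - μ := by
    rcases le_total η₁ 0 with h | h
    · rw [hμ, min_eq_left h]; linarith
    · rw [hμ, min_eq_right h]; linarith
  have hμ2 : η₁ - μ ≤ 1 := by
    rcases le_total η₁ 0 with h | h
    · rw [hμ, min_eq_left h]; linarith
    · rw [hμ, min_eq_right h]; linarith
  set KA := (1 - (2:ℝ) ^ η₁)⁻¹ with hKA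
  set KB := ((2:ℝ) ^ η₁ - 1)⁻¹ with hKB
  set K₁ := max (max (T ^ (-η₁)) KA) (max 1 (KB * T ^ η₁)) with hK₁
  have hK₁1 : (1:ℝ) ≤ K₁ := le_trans (le_max_left 1 _) (le_max_right _ _)
  have hK₁0 : (0:ℝ) ≤ K₁ := by linarith
  set mT := max 1 T with hmT
  have hmT1 : (1:ℝ) ≤ mT := le_max_left _ _
  have hmT0 : (0:ℝ) ≤ mT := by linarith
  set M₀ := K₁ + Csew * mT with hM₀
  have hM₀pos : 0 < M₀ := by
    have : 0 ≤ Csew * mT := mul_nonneg hCsew hmT0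
    linarith
  have hpη : (1:ℝ) < (2:ℝ) ^ η :=
    Real.one_lt_rpow_iff_of_pos two_pos |>.mpr (Or.inl ⟨one_lt_two, hηpos⟩)
  set KC := ((2:ℝ) ^ η - 1)⁻¹ with hKC
  have hKCpos : 0 < KC := inv_pos.mpr (by linarith)
  have hfac1 : (1:ℝ) ≤ (2:ℝ) ^ η * KC := by
    rw [hKC, ← div_eq_mul_inv, le_div_iff₀ (by linarith)]
    linarith
  set M := M₀ * ((2:ℝ) ^ η * KC) with hM
  have hMpos : 0 < M := by
    apply mul_pos hM₀pos; linarith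
  have hM₀M : M₀ ≤ M := by
    calc M₀ = M₀ * 1 := by ring
      _ ≤ M₀ * ((2:ℝ) ^ η * KC) := by
          exact mul_le_mul_of_nonneg_left hfac1 hM₀pos.le
  refine ⟨M, hMpos, ?_⟩
  intro Y X I Z CY CX hCY hCX hY hX hadd hsew hlim
  have hP : (0:ℝ) ≤ |Y T| + CY := by positivity
  -- pointwise bound on |Y s|
  have hYs : ∀ s : ℝ, 0 < s → s < T → |Y s| ≤ K₁ * (|Y T| + CY) * s ^ μ := by
    intro s hs hsT
    obtain ⟨n, hn⟩ := pow_unbounded_of_one_lt (T / s) one_lt_two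
    have hTn : T ≤ 2 ^ n * s := by
      rw [div_lt_iff₀ hs] at hn; linarith
    have htri : |Y s| ≤ |Y T| + |Y T - Y s| := by
      calc |Y s| = |Y T + (Y s - Y T)| := by ring_nf
        _ ≤ |Y T| + |Y s - Y T| := abs_add_le _ _
        _ = |Y T| + |Y T - Y s| := by rw [abs_sub_comm]
    have hsη : (0:ℝ) < s ^ η₁ := Real.rpow_pos_of_pos hs _
    rcases lt_or_gt_of_ne hη₁ with h | h
    · -- η₁ < 0
      have hμe : μ = η₁ := min_eq_left h.le
      have hchain := chain_neg hα₁ h hCY hY n s T hs hsT le_rfl hTn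
      have hTs : T ^ η₁ ≤ s ^ η₁ :=
        Real.rpow_le_rpow_of_nonpos hs hsT.le h.le
      have hone : T ^ (-η₁) * T ^ η₁ = 1 := by
        rw [← Real.rpow_add hT]; simp
      have hYT : |Y T| ≤ T ^ (-η₁) * |Y T| * s ^ η₁ := by
        have h0 : (0:ℝ) ≤ T ^ (-η₁) * |Y T| := by positivity
        have heq : (T ^ (-η₁) * |Y T|) * T ^ η₁ = |Y T| := by
          rw [mul_comm (T ^ (-η₁)) |Y T|, mul_assoc, ← Real.rpow_add hT]
          simp
        calc |Y T| = (T ^ (-η₁) * |Y T|) * T ^ η₁ := heq.symm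
          _ ≤ (T ^ (-η₁) * |Y T|) * s ^ η₁ := mul_le_mul_of_nonneg_left hTs h0
          _ = T ^ (-η₁) * |Y T| * s ^ η₁ := by ring
      have c1 : T ^ (-η₁) ≤ K₁ := le_trans (le_max_left _ _) (le_max_left _ _)
      have c2 : KA ≤ K₁ := le_trans (le_max_right _ _) (le_max_left _ _)
      rw [hμe]
      calc |Y s| ≤ T ^ (-η₁) * |Y T| * s ^ η₁ + KA * CY * s ^ η₁ := by linarith
        _ ≤ K₁ * |Y T| * s ^ η₁ + K₁ * CY * s ^ η₁ := by
            apply add_le_add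
            · exact mul_le_mul_of_nonneg_right
                (mul_le_mul_of_nonneg_right c1 (abs_nonneg _)) hsη.le
            · exact mul_le_mul_of_nonneg_right
                (mul_le_mul_of_nonneg_right c2 hCY) hsη.le
        _ = K₁ * (|Y T| + CY) * s ^ η₁ := by ring
    · -- η₁ > 0
      have hμe : μ = 0 := min_eq_right h.le
      have hchain := chain_pos hα₁ h hη₁α hCY hY n s T hs hsT le_rfl hTn
      have c2 : KB * T ^ η₁ ≤ K₁ := le_trans (le_max_right 1 _) (le_max_right _ _)
      rw [hμe, Real.rpow_zero, mul_one]
      calc |Y s| ≤ |Y T| + KB * CY * T ^ η₁ := by linarith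
        _ = |Y T| + (KB * T ^ η₁) * CY := by ring
        _ ≤ K₁ * |Y T| + K₁ * CY := by
            apply add_le_add
            · nlinarith [abs_nonneg (Y T)]
            · exact mul_le_mul_of_nonneg_right c2 hCY
        _ = K₁ * (|Y T| + CY) := by ring
  -- local bound on the integral
  have hloc : ∀ s t : ℝ, 0 < s → s < t → t ≤ T → t ≤ 2 * s →
      |I s t| ≤ M₀ * (|Y T| + CY) * CX * s ^ (η - α₂) * (t - s) ^ α₂ := by
    intro s t hs hst htT h2
    have hsT : s < T := lt_of_lt_of_le hst htT
    have hts : (0:ℝ) < t - s := by linarith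
    have hb : (0:ℝ) ≤ (t - s) ^ α₂ := (Real.rpow_pos_of_pos hts _).le
    have htri : |I s t| ≤ |I s t - Y s * (X t - X s)| + |Y s| * |X t - X s| := by
      calc |I s t| = |(I s t - Y s * (X t - X s)) + Y s * (X t - X s)| := by ring_nf
        _ ≤ |I s t - Y s * (X t - X s)| + |Y s * (X t - X s)| := abs_add_le _ _
        _ = |I s t - Y s * (X t - X s)| + |Y s| * |X t - X s| := by rw [abs_mul]
    have hterm2 : |Y s| * |X t - X s| ≤
        K₁ * (|Y T| + CY) * CX * s ^ (η - α₂) * (t - s) ^ α₂ := by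
      have h1 := hYs s hs hsT
      have h2' := hX s t hs hst htT
      have h3 : |Y s| * |X t - X s| ≤
          (K₁ * (|Y T| + CY) * s ^ μ) * (CX * s ^ (η₂ - α₂) * (t - s) ^ α₂) := by
        apply mul_le_mul h1 h2' (abs_nonneg _)
        have : (0:ℝ) ≤ s ^ μ := (Real.rpow_pos_of_pos hs _).le
        positivity
      have h4 : s ^ μ * s ^ (η₂ - α₂) = s ^ (η - α₂) := by
        rw [← Real.rpow_add hs]; congr 1; rw [hηdef]; ring
      calc |Y s| * |X t - X s|
          ≤ (K₁ * (|Y T| + CY) * s ^ μ) * (CX * s ^ (η₂ - α₂) * (t - s) ^ α₂) := h3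
        _ = K₁ * (|Y T| + CY) * CX * (s ^ μ * s ^ (η₂ - α₂)) * (t - s) ^ α₂ := by ring
        _ = K₁ * (|Y T| + CY) * CX * s ^ (η - α₂) * (t - s) ^ α₂ := by rw [h4]
    have hterm1 : |I s t - Y s * (X t - X s)| ≤
        Csew * mT * (|Y T| + CY) * CX * s ^ (η - α₂) * (t - s) ^ α₂ := by
      have h1 := hsew s t hs hst htT
      have hsplit : (t - s) ^ (α₁ + α₂) = (t - s) ^ α₁ * (t - s) ^ α₂ :=
        Real.rpow_add hts _ _
      have h4 : (t - s) ^ α₁ ≤ s ^ α₁ :=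
        Real.rpow_le_rpow hts.le (by linarith) hα₁.le
      have h5 : s ^ (η₂ - α₂) * s ^ (η₁ - α₁) * s ^ α₁ = s ^ (η₁ - μ) * s ^ (η - α₂) := by
        rw [← Real.rpow_add hs, ← Real.rpow_add hs, ← Real.rpow_add hs]
        congr 1; rw [hηdef]; ring
      have h6 : s ^ (η₁ - μ) ≤ mT := by
        calc s ^ (η₁ - μ) ≤ mT ^ (η₁ - μ) := by
              apply Real.rpow_le_rpow hs.le _ hμ1
              exact le_trans hsT.le (le_max_right 1 T)
          _ ≤ mT ^ (1:ℝ) := Real.rpow_le_rpow_of_exponent_le hmT1 hμ2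
          _ = mT := Real.rpow_one _
      have hse : (0:ℝ) < s ^ (η - α₂) := Real.rpow_pos_of_pos hs _
      have hs1 : (0:ℝ) < s ^ (η₂ - α₂) := Real.rpow_pos_of_pos hs _
      have hs2 : (0:ℝ) < s ^ (η₁ - α₁) := Real.rpow_pos_of_pos hs _
      have hta : (0:ℝ) ≤ (t - s) ^ α₁ := (Real.rpow_pos_of_pos hts _).le
      calc |I s t - Y s * (X t - X s)|
          ≤ Csew * (CX * s ^ (η₂ - α₂)) * (CY * s ^ (η₁ - α₁)) * (t - s) ^ (α₁ + α₂) := h1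
        _ = (Csew * CX * CY) * (s ^ (η₂ - α₂) * s ^ (η₁ - α₁) * (t - s) ^ α₁) *
              (t - s) ^ α₂ := by rw [hsplit]; ring
        _ ≤ (Csew * CX * CY) * (s ^ (η₂ - α₂) * s ^ (η₁ - α₁) * s ^ α₁) *
              (t - s) ^ α₂ := by
            apply mul_le_mul_of_nonneg_right _ hb
            apply mul_le_mul_of_nonneg_left _ (by positivity)
            exact mul_le_mul_of_nonneg_left h4 (by positivity)
        _ = (Csew * CX * CY) * (s ^ (η₁ - μ) * s ^ (η - α₂)) * (t - s) ^ α₂ := by rw [h5]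
        _ ≤ (Csew * CX * CY) * (mT * s ^ (η - α₂)) * (t - s) ^ α₂ := by
            apply mul_le_mul_of_nonneg_right _ hb
            apply mul_le_mul_of_nonneg_left _ (by positivity)
            exact mul_le_mul_of_nonneg_right h6 hse.le
        _ = Csew * mT * CY * CX * s ^ (η - α₂) * (t - s) ^ α₂ := by ring
        _ ≤ Csew * mT * (|Y T| + CY) * CX * s ^ (η - α₂) * (t - s) ^ α₂ := by
            have hcyP : CY ≤ |Y T| + CY := by
              have := abs_nonneg (Y T); linarith
            have h7 : Csew * mT * CY ≤ Csew * mT * (|Y T| + CY) :=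
              mul_le_mul_of_nonneg_left hcyP (by positivity)
            exact mul_le_mul_of_nonneg_right
              (mul_le_mul_of_nonneg_right
                (mul_le_mul_of_nonneg_right h7 hCX) hse.le) hb
    calc |I s t| ≤ |I s t - Y s * (X t - X s)| + |Y s| * |X t - X s| := htri
      _ ≤ Csew * mT * (|Y T| + CY) * CX * s ^ (η - α₂) * (t - s) ^ α₂ +
            K₁ * (|Y T| + CY) * CX * s ^ (η - α₂) * (t - s) ^ α₂ := by linarith
      _ = M₀ * (|Y T| + CY) * CX * s ^ (η - α₂) * (t - s) ^ α₂ := by rw [hM₀]; ring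
  -- identify increments of Z
  have hZI : ∀ s t : ℝ, 0 < s → s < t → t ≤ T → Z t - Z s = I s t := by
    intro s t hs hst htT
    have hlim_t := hlim t (by linarith) htT
    have hlim_s := hlim s hs (by linarith)
    have h1 : Tendsto (fun ε => I ε t - I ε s) (nhdsWithin 0 (Ioi 0))
        (nhds (Z t - Z s)) := hlim_t.sub hlim_s
    have h2 : (fun ε => I ε t - I ε s) =ᶠ[nhdsWithin (0:ℝ) (Ioi 0)]
        (fun _ => I s t) := by
      filter_upwards [Ioo_mem_nhdsGT_of_mem (left_mem_Ico.mpr hs)] with ε hε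
      have := hadd ε s t hε.1 hε.2.le (by linarith) htT
      linarith
    have h3 : Tendsto (fun _ : ℝ => I s t) (nhdsWithin (0:ℝ) (Ioi 0))
        (nhds (Z t - Z s)) := Tendsto.congr' h2 h1
    exact tendsto_nhds_unique h3 tendsto_const_nhds
  -- conclusion
  intro s t hs hst htT
  have hts : (0:ℝ) < t - s := by linarith
  have hb : (0:ℝ) ≤ (t - s) ^ α₂ := (Real.rpow_pos_of_pos hts _).le
  have hse : (0:ℝ) ≤ s ^ (η - α₂) := (Real.rpow_pos_of_pos hs _).le
  set A := M₀ * (|Y T| + CY) * CX with hA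
  have hA0 : (0:ℝ) ≤ A := by positivity
  rw [hZI s t hs hst htT]
  by_cases h2 : t ≤ 2 * s
  · calc |I s t| ≤ A * s ^ (η - α₂) * (t - s) ^ α₂ := hloc s t hs hst htT h2
      _ = M₀ * (|Y T| + CY) * CX * s ^ (η - α₂) * (t - s) ^ α₂ := by rw [hA]
      _ ≤ M * (|Y T| + CY) * CX * s ^ (η - α₂) * (t - s) ^ α₂ := by
          have h7 : M₀ * (|Y T| + CY) * CX ≤ M * (|Y T| + CY) * CX :=
            mul_le_mul_of_nonneg_right (mul_le_mul_of_nonneg_right hM₀M hP) hCX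
          exact mul_le_mul_of_nonneg_right (mul_le_mul_of_nonneg_right h7 hse) hb
  · push_neg at h2
    obtain ⟨n, hn⟩ := pow_unbounded_of_one_lt (t / s) one_lt_two
    have htn : t ≤ 2 ^ n * s := by
      rw [div_lt_iff₀ hs] at hn; linarith
    have hchain := chain_int hα₂ hηpos hηα hA0 hadd hloc n s t hs hst htT htn
    have ht2 : (0:ℝ) < t / 2 := by linarith
    have e1 : (t/2) ^ (η - α₂) ≤ s ^ (η - α₂) :=
      Real.rpow_le_rpow_of_nonpos hs (by linarith) (by linarith)
    have e2 : (t/2) ^ α₂ ≤ (t - s) ^ α₂ :=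
      Real.rpow_le_rpow ht2.le (by linarith) hα₂.le
    have e3 : t ^ η = (2:ℝ) ^ η * ((t/2) ^ (η - α₂) * (t/2) ^ α₂) := by
      rw [← Real.rpow_add ht2]
      rw [show η - α₂ + α₂ = η by ring]
      rw [← Real.mul_rpow (by norm_num) ht2.le]
      rw [show (2:ℝ) * (t/2) = t by ring]
    calc |I s t| ≤ KC * A * t ^ η := hchain
      _ = A * ((2:ℝ) ^ η * KC) * ((t/2) ^ (η - α₂) * (t/2) ^ α₂) := by rw [e3]; ring
      _ ≤ A * ((2:ℝ) ^ η * KC) * (s ^ (η - α₂) * (t - s) ^ α₂) := by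
          apply mul_le_mul_of_nonneg_left _ (by positivity)
          apply mul_le_mul e1 e2 ((Real.rpow_pos_of_pos ht2 _).le) hse
      _ = M * (|Y T| + CY) * CX * s ^ (η - α₂) * (t - s) ^ α₂ := by
          rw [hA, hM]; ring
end

section
/- (Singular Besov–Hölder embedding) Let 0 < δ < 1, q ≥ 1 with α := δ − 1/q > 0, and η ≤ α. If a continuous path Y : (0,T] → ℝ satisfies ‖Y‖_{δ,q,η} := (∬_{0<s<t<T} |Y_t − Y_s|^q / (s^{q(η−α)} |t−s|^{1+δq}) ds dt)^{1/q} < ∞, then Y belongs to the singular Hölder space C^{α,η}((0,T]) and ‖Y‖_{α,η} ≤ ‖Y‖_{δ,q,η}. -/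
open Set MeasureTheory ENNReal

/-- Singular Besov–Hölder embedding: a path with finite singular Besov norm
`‖Y‖_{δ,q,η} ≤ Bη` lies in the singular Hölder space `C^{α,η}((0,T])` with
`‖Y‖_{α,η} ≤ Bη`, given the classical Besov (Garsia–Rodemich–Rumsey) embedding
with constant one as stated in the paper. -/
theorem singular_besov_holder_embedding
    (T δ q η α : ℝ) (hT : 0 < T) (hδ0 : 0 < δ) (hδ1 : δ < 1) (hq : 1 ≤ q)
    (hα : α = δ - 1/q) (hα0 : 0 < α) (hηα : η ≤ α)
    (Y : ℝ → ℝ) (hcont : ContinuousOn Y (Ioc 0 T))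
    (Bη : ℝ) (hB0 : 0 ≤ Bη)
    (hGRR : ∀ ε B : ℝ, 0 < ε → 0 ≤ B →
      (∫⁻ p in {p : ℝ × ℝ | ε < p.1 ∧ p.1 < p.2 ∧ p.2 < T},
          ENNReal.ofReal (|Y p.2 - Y p.1| ^ q / (p.2 - p.1) ^ (1 + δ * q)))
        ≤ ENNReal.ofReal (B ^ q) →
      ∀ s t : ℝ, ε ≤ s → s < t → t ≤ T → |Y t - Y s| ≤ B * (t - s) ^ α)
    (hbesov : (∫⁻ p in {p : ℝ × ℝ | 0 < p.1 ∧ p.1 < p.2 ∧ p.2 < T},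
        ENNReal.ofReal (|Y p.2 - Y p.1| ^ q /
          (p.1 ^ (q * (η - α)) * (p.2 - p.1) ^ (1 + δ * q))))
      ≤ ENNReal.ofReal (Bη ^ q)) :
    ∀ s t : ℝ, 0 < s → s < t → t ≤ T →
      |Y t - Y s| ≤ Bη * s ^ (η - α) * (t - s) ^ α := by
  intro s t hs hst htT
  have hq0 : (0:ℝ) < q := lt_of_lt_of_le one_pos hq
  have hsw : (0:ℝ) ≤ s ^ (η - α) := Real.rpow_nonneg hs.le _
  set B := Bη * s ^ (η - α) with hBdef
  have hB : 0 ≤ B := mul_nonneg hB0 hsw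
  have hwle : q * (η - α) ≤ 0 :=
    mul_nonpos_of_nonneg_of_nonpos hq0.le (by linarith)
  have key : (∫⁻ p in {p : ℝ × ℝ | s < p.1 ∧ p.1 < p.2 ∧ p.2 < T},
      ENNReal.ofReal (|Y p.2 - Y p.1| ^ q / (p.2 - p.1) ^ (1 + δ * q)))
      ≤ ENNReal.ofReal (B ^ q) := by
    have hAmeas : MeasurableSet {p : ℝ × ℝ | s < p.1 ∧ p.1 < p.2 ∧ p.2 < T} := by
      have : IsOpen {p : ℝ × ℝ | s < p.1 ∧ p.1 < p.2 ∧ p.2 < T} := by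
        have h1 : IsOpen {p : ℝ × ℝ | s < p.1} :=
          isOpen_lt continuous_const continuous_fst
        have h2 : IsOpen {p : ℝ × ℝ | p.1 < p.2} :=
          isOpen_lt continuous_fst continuous_snd
        have h3 : IsOpen {p : ℝ × ℝ | p.2 < T} :=
          isOpen_lt continuous_snd continuous_const
        have : {p : ℝ × ℝ | s < p.1 ∧ p.1 < p.2 ∧ p.2 < T}
            = {p : ℝ × ℝ | s < p.1} ∩ ({p : ℝ × ℝ | p.1 < p.2} ∩ {p : ℝ × ℝ | p.2 < T}) := by
          ext p; simp [and_assoc]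
        rw [this]; exact h1.inter (h2.inter h3)
      exact this.measurableSet
    have hpt : ∀ p ∈ {p : ℝ × ℝ | s < p.1 ∧ p.1 < p.2 ∧ p.2 < T},
        ENNReal.ofReal (|Y p.2 - Y p.1| ^ q / (p.2 - p.1) ^ (1 + δ * q))
        ≤ ENNReal.ofReal (s ^ (q * (η - α))) * ENNReal.ofReal (|Y p.2 - Y p.1| ^ q /
            (p.1 ^ (q * (η - α)) * (p.2 - p.1) ^ (1 + δ * q))) := by
      rintro p ⟨hp1, hp2, hp3⟩
      have hp1pos : 0 < p.1 := hs.trans hp1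
      have hdpos : (0:ℝ) < (p.2 - p.1) ^ (1 + δ * q) :=
        Real.rpow_pos_of_pos (by linarith) _
      have hupos : (0:ℝ) < p.1 ^ (q * (η - α)) := Real.rpow_pos_of_pos hp1pos _
      have hu_le : p.1 ^ (q * (η - α)) ≤ s ^ (q * (η - α)) :=
        Real.rpow_le_rpow_of_nonpos hs hp1.le hwle
      have ha : (0:ℝ) ≤ |Y p.2 - Y p.1| ^ q := Real.rpow_nonneg (abs_nonneg _) _
      rw [← ENNReal.ofReal_mul (Real.rpow_nonneg hs.le _)]
      apply ENNReal.ofReal_le_ofReal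
      have heq : |Y p.2 - Y p.1| ^ q / (p.2 - p.1) ^ (1 + δ * q)
          = p.1 ^ (q * (η - α)) * (|Y p.2 - Y p.1| ^ q /
              (p.1 ^ (q * (η - α)) * (p.2 - p.1) ^ (1 + δ * q))) := by
        field_simp
      rw [heq]
      exact mul_le_mul_of_nonneg_right hu_le
        (div_nonneg ha (mul_nonneg hupos.le hdpos.le))
    calc (∫⁻ p in {p : ℝ × ℝ | s < p.1 ∧ p.1 < p.2 ∧ p.2 < T},
          ENNReal.ofReal (|Y p.2 - Y p.1| ^ q / (p.2 - p.1) ^ (1 + δ * q)))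
        ≤ ∫⁻ p in {p : ℝ × ℝ | s < p.1 ∧ p.1 < p.2 ∧ p.2 < T},
            ENNReal.ofReal (s ^ (q * (η - α))) * ENNReal.ofReal (|Y p.2 - Y p.1| ^ q /
              (p.1 ^ (q * (η - α)) * (p.2 - p.1) ^ (1 + δ * q))) :=
          setLIntegral_mono' hAmeas hpt
      _ = ENNReal.ofReal (s ^ (q * (η - α))) *
            ∫⁻ p in {p : ℝ × ℝ | s < p.1 ∧ p.1 < p.2 ∧ p.2 < T},
              ENNReal.ofReal (|Y p.2 - Y p.1| ^ q /
                (p.1 ^ (q * (η - α)) * (p.2 - p.1) ^ (1 + δ * q))) :=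
          lintegral_const_mul' _ _ ENNReal.ofReal_ne_top
      _ ≤ ENNReal.ofReal (s ^ (q * (η - α))) *
            ∫⁻ p in {p : ℝ × ℝ | 0 < p.1 ∧ p.1 < p.2 ∧ p.2 < T},
              ENNReal.ofReal (|Y p.2 - Y p.1| ^ q /
                (p.1 ^ (q * (η - α)) * (p.2 - p.1) ^ (1 + δ * q))) := by
          gcongr
      _ ≤ ENNReal.ofReal (s ^ (q * (η - α))) * ENNReal.ofReal (Bη ^ q) := by
          gcongr
      _ = ENNReal.ofReal (B ^ q) := by
          rw [← ENNReal.ofReal_mul (Real.rpow_nonneg hs.le _)]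
          congr 1
          rw [hBdef, Real.mul_rpow hB0 hsw, mul_comm q (η - α),
            Real.rpow_mul hs.le, mul_comm]
  have := hGRR s B hs hB key s t le_rfl hst htT
  calc |Y t - Y s| ≤ B * (t - s) ^ α := this
    _ = Bη * s ^ (η - α) * (t - s) ^ α := by rw [hBdef]
end

section
/- (Improper rough integral, convergence) Let α,β,γ ∈ (0,1) with α+β+γ > 1, let (Y,Y') ∈ D^{γ+β,η₁}_{X̂}((0,T]) be a singular controlled rough path and 𝕏 ∈ C_{η₂}((0,T]) a singular inhomogeneous rough path. If η₂ > β ∨ α, 2(η₂−β)+η₁−α > 0 and η₁ ∉ {0, β}, then for every 0 < t ≤ T the limit Z_t := lim_{ε→0⁺} ∫_ε^t Y_r d𝕏_r of rough integrals exists. -/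
open Set Filter


private lemma rpow_collapse {T s a e : ℝ} (hs : 0 < s) (hsT : s ≤ T) (hea : e ≤ a) :
    s ^ a ≤ T ^ (a - e) * s ^ e := by
  have h0 : a - e + e = a := by ring
  have h1 : s ^ a = s ^ (a - e) * s ^ e := by
    rw [← Real.rpow_add hs, h0]
  rw [h1]
  exact mul_le_mul_of_nonneg_right
    (Real.rpow_le_rpow hs.le hsT (by linarith)) (Real.rpow_nonneg hs.le e)

private lemma collapse2 {T s x y e : ℝ} (hs : 0 < s) (hsT : s ≤ T) (he : e ≤ x + y) :
    s ^ x * s ^ y ≤ T ^ (x + y - e) * s ^ e := by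
  rw [← Real.rpow_add hs]
  exact rpow_collapse hs hsT he

private lemma collapse3 {T s x y z e : ℝ} (hs : 0 < s) (hsT : s ≤ T) (he : e ≤ x + y + z) :
    s ^ x * s ^ y * s ^ z ≤ T ^ (x + y + z - e) * s ^ e := by
  rw [← Real.rpow_add hs, ← Real.rpow_add hs]
  exact rpow_collapse hs hsT he

private lemma abs_le_abs_add_abs_sub (a b : ℝ) : |a| ≤ |b| + |b - a| := by
  have h1 : a = b + -(b - a) := by ring
  calc |a| = |b + -(b - a)| := by rw [← h1]
    _ ≤ |b| + |-(b - a)| := abs_add_le _ _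
    _ = |b| + |b - a| := by rw [abs_neg]

private lemma dyadic_bound {T e K : ℝ} (hT : 0 < T) (he : e ≠ 0) (hK : 0 ≤ K)
    (f : ℝ → ℝ)
    (hstep : ∀ s, 0 < s → s < T → |f s| ≤ |f (min (2 * s) T)| + K * s ^ e) :
    ∃ C, 0 ≤ C ∧ ∀ s, 0 < s → s ≤ T → |f s| ≤ C * (1 + s ^ e) := by
  rcases lt_or_gt_of_ne he with hneg | hpos
  · -- e < 0
    have h2e : (2:ℝ) ^ e < 1 := Real.rpow_lt_one_of_one_lt_of_neg one_lt_two hneg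
    have h2e0 : (0:ℝ) < (2:ℝ) ^ e := Real.rpow_pos_of_pos two_pos e
    set M := K / (1 - 2 ^ e) with hM
    have hM0 : 0 ≤ M := div_nonneg hK (by linarith)
    have hMne : (1:ℝ) - 2 ^ e ≠ 0 := ne_of_gt (by linarith)
    have hMc : M * (1 - 2 ^ e) = K := div_mul_cancel₀ K hMne
    have hMK : M * (2:ℝ) ^ e + K = M := by
      have hexp : M * ((1:ℝ) - 2 ^ e) = M - M * 2 ^ e := by ring
      linarith
    have key : ∀ n : ℕ, ∀ s, 0 < s → s ≤ T → T ≤ 2 ^ n * s →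
        |f s| ≤ |f T| + K * (T / 2) ^ e + M * s ^ e := by
      intro n
      induction n with
      | zero =>
        intro s hs hsT hTs
        simp only [pow_zero, one_mul] at hTs
        have hsT' : s = T := le_antisymm hsT hTs
        subst hsT'
        have h1 : 0 ≤ K * (s / 2) ^ e :=
          mul_nonneg hK (Real.rpow_nonneg (by positivity) e)
        have h2 : 0 ≤ M * s ^ e := mul_nonneg hM0 (Real.rpow_nonneg hs.le e)
        linarith
      | succ n ih =>
        intro s hs hsT hTs
        rcases eq_or_lt_of_le hsT with rfl | hlt
        · have h1 : 0 ≤ K * (s / 2) ^ e :=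
            mul_nonneg hK (Real.rpow_nonneg (by positivity) e)
          have h2 : 0 ≤ M * s ^ e := mul_nonneg hM0 (Real.rpow_nonneg hs.le e)
          linarith
        · have hbd := hstep s hs hlt
          by_cases h2s : 2 * s ≤ T
          · rw [min_eq_left h2s] at hbd
            have h2s0 : 0 < 2 * s := by linarith
            have harg : T ≤ 2 ^ n * (2 * s) := by
              calc T ≤ 2 ^ (n + 1) * s := hTs
                _ = 2 ^ n * (2 * s) := by ring
            have ih2 := ih (2 * s) h2s0 h2s harg
            have hmul : ((2:ℝ) * s) ^ e = 2 ^ e * s ^ e :=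
              Real.mul_rpow (by norm_num) hs.le
            rw [hmul] at ih2
            have hcomb : M * (2 ^ e * s ^ e) + K * s ^ e = M * s ^ e := by
              have h3 : M * ((2:ℝ) ^ e * s ^ e) + K * s ^ e
                  = (M * 2 ^ e + K) * s ^ e := by ring
              rw [h3, hMK]
            linarith
          · rw [min_eq_right (by linarith)] at hbd
            have hhalf : s ^ e ≤ (T / 2) ^ e :=
              Real.rpow_le_rpow_of_nonpos (by linarith) (by linarith) hneg.le
            have h4 : K * s ^ e ≤ K * (T / 2) ^ e :=
              mul_le_mul_of_nonneg_left hhalf hK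
            have h5 : 0 ≤ M * s ^ e := mul_nonneg hM0 (Real.rpow_nonneg hs.le e)
            linarith
    refine ⟨|f T| + K * (T / 2) ^ e + M,
      add_nonneg (add_nonneg (abs_nonneg _)
        (mul_nonneg hK (Real.rpow_nonneg (by positivity) e))) hM0, ?_⟩
    intro s hs hsT
    obtain ⟨n, hn⟩ := pow_unbounded_of_one_lt (T / s) one_lt_two
    have hTn : T ≤ 2 ^ n * s := by
      rw [div_lt_iff₀ hs] at hn; linarith
    have hk := key n s hs hsT hTn
    have hse : 0 ≤ s ^ e := Real.rpow_nonneg hs.le e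
    have h1 : M ≤ |f T| + K * (T / 2) ^ e + M := by
      have := abs_nonneg (f T)
      have := mul_nonneg hK (Real.rpow_nonneg (show (0:ℝ) ≤ T / 2 by positivity) e)
      linarith
    have h2 := mul_le_mul_of_nonneg_right h1 hse
    have h3 : (|f T| + K * (T / 2) ^ e + M) * (1 + s ^ e)
        = (|f T| + K * (T / 2) ^ e + M) + (|f T| + K * (T / 2) ^ e + M) * s ^ e := by ring
    linarith
  · -- e > 0
    have h2e : (1:ℝ) < (2:ℝ) ^ e :=
      (Real.one_lt_rpow_iff_of_pos two_pos).mpr (Or.inl ⟨one_lt_two, hpos⟩)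
    set M := K / (2 ^ e - 1) with hM
    have hM0 : 0 ≤ M := div_nonneg hK (by linarith)
    have hMne : (2:ℝ) ^ e - 1 ≠ 0 := ne_of_gt (by linarith)
    have hMc : M * ((2:ℝ) ^ e - 1) = K := div_mul_cancel₀ K hMne
    have hTe : (0:ℝ) ≤ T ^ e := Real.rpow_nonneg hT.le e
    have key : ∀ n : ℕ, ∀ s, 0 < s → s ≤ T → T ≤ 2 ^ n * s →
        |f s| ≤ |f T| + K * T ^ e + M * (2 ^ e * T ^ e - s ^ e) := by
      intro n
      induction n with
      | zero =>
        intro s hs hsT hTs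
        simp only [pow_zero, one_mul] at hTs
        have hsT' : s = T := le_antisymm hsT hTs
        subst hsT'
        have hse : (0:ℝ) ≤ s ^ e := Real.rpow_nonneg hs.le e
        have h1 : M * ((2:ℝ) ^ e * s ^ e - s ^ e) = K * s ^ e := by
          have : M * ((2:ℝ) ^ e * s ^ e - s ^ e) = (M * (2 ^ e - 1)) * s ^ e := by ring
          rw [this, hMc]
        have h2 : 0 ≤ K * s ^ e := mul_nonneg hK hse
        linarith
      | succ n ih =>
        intro s hs hsT hTs
        rcases eq_or_lt_of_le hsT with rfl | hlt
        · have hse : (0:ℝ) ≤ s ^ e := Real.rpow_nonneg hs.le e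
          have h1 : M * ((2:ℝ) ^ e * s ^ e - s ^ e) = K * s ^ e := by
            have : M * ((2:ℝ) ^ e * s ^ e - s ^ e) = (M * (2 ^ e - 1)) * s ^ e := by ring
            rw [this, hMc]
          have h2 : 0 ≤ K * s ^ e := mul_nonneg hK hse
          linarith
        · have hbd := hstep s hs hlt
          by_cases h2s : 2 * s ≤ T
          · rw [min_eq_left h2s] at hbd
            have h2s0 : 0 < 2 * s := by linarith
            have harg : T ≤ 2 ^ n * (2 * s) := by
              calc T ≤ 2 ^ (n + 1) * s := hTs
                _ = 2 ^ n * (2 * s) := by ring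
            have ih2 := ih (2 * s) h2s0 h2s harg
            have hmul : ((2:ℝ) * s) ^ e = 2 ^ e * s ^ e :=
              Real.mul_rpow (by norm_num) hs.le
            rw [hmul] at ih2
            have heq : M * (2 ^ e * T ^ e - 2 ^ e * s ^ e) + (M * ((2:ℝ) ^ e - 1)) * s ^ e
                = M * (2 ^ e * T ^ e - s ^ e) := by ring
            rw [hMc] at heq
            linarith
          · rw [min_eq_right (by linarith)] at hbd
            have h1 : s ^ e ≤ T ^ e := Real.rpow_le_rpow hs.le hsT hpos.le
            have h2 : T ^ e ≤ 2 ^ e * T ^ e := by nlinarith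
            have h3 : 0 ≤ M * (2 ^ e * T ^ e - s ^ e) :=
              mul_nonneg hM0 (by linarith)
            have h4 : K * s ^ e ≤ K * T ^ e := mul_le_mul_of_nonneg_left h1 hK
            linarith
    refine ⟨|f T| + K * T ^ e + M * (2 ^ e * T ^ e),
      add_nonneg (add_nonneg (abs_nonneg _) (mul_nonneg hK hTe))
        (mul_nonneg hM0 (mul_nonneg (Real.rpow_nonneg (by norm_num) e) hTe)), ?_⟩
    intro s hs hsT
    obtain ⟨n, hn⟩ := pow_unbounded_of_one_lt (T / s) one_lt_two
    have hTn : T ≤ 2 ^ n * s := by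
      rw [div_lt_iff₀ hs] at hn; linarith
    have hk := key n s hs hsT hTn
    have hse : 0 ≤ s ^ e := Real.rpow_nonneg hs.le e
    have hC0 : 0 ≤ |f T| + K * T ^ e + M * (2 ^ e * T ^ e) :=
      add_nonneg (add_nonneg (abs_nonneg _) (mul_nonneg hK hTe))
        (mul_nonneg hM0 (mul_nonneg (Real.rpow_nonneg (by norm_num) e) hTe))
    have h3 : (|f T| + K * T ^ e + M * (2 ^ e * T ^ e)) * (1 + s ^ e)
        = (|f T| + K * T ^ e + M * (2 ^ e * T ^ e))
          + (|f T| + K * T ^ e + M * (2 ^ e * T ^ e)) * s ^ e := by ring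
    have h4 := mul_nonneg hC0 hse
    have h5 : M * (2 ^ e * T ^ e - s ^ e) = M * (2 ^ e * T ^ e) - M * s ^ e := by ring
    have h6 : 0 ≤ M * s ^ e := mul_nonneg hM0 hse
    linarith

/-- Improper rough integral, convergence: for a singular controlled rough path
`(Y,Y') ∈ D^{γ+β,η₁}_{X̂}((0,T])` against a singular inhomogeneous rough path
`𝕏 = (X,X̂,𝕏) ∈ C_{η₂}((0,T])`, with `η₂ > β ⊔ α`, `2(η₂-β)+η₁-α > 0`,
`η₁ ∉ {0,β}`, the rough integrals `I ε t = ∫_ε^t Y d𝕏` (additive, satisfying the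
sewing estimate) converge as `ε → 0⁺`. -/
theorem improper_rough_integral_exists
    (T α β γ η₁ η₂ : ℝ) (hT : 0 < T)
    (hα : 0 < α) (hα1 : α < 1) (hβ : 0 < β) (hβ1 : β < 1)
    (hγ : 0 < γ) (hγ1 : γ < 1) (hαβγ : 1 < α + β + γ)
    (hη₁ : η₁ ≤ γ + β) (hη₂ : η₂ ≤ α + β)
    (hη₂' : max β α < η₂) (hmix : 0 < 2 * (η₂ - β) + η₁ - α)
    (hη₁0 : η₁ ≠ 0) (hη₁β : η₁ ≠ β)
    (X Xh : ℝ → ℝ) (XX : ℝ → ℝ → ℝ) (Y Y' : ℝ → ℝ) (I : ℝ → ℝ → ℝ)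
    (KX KY Csew : ℝ) (hKX : 0 ≤ KX) (hKY : 0 ≤ KY) (hCsew : 0 ≤ Csew)
    (hChen : ∀ s u t : ℝ, 0 < s → s ≤ u → u ≤ t → t ≤ T →
      XX s t = XX s u + XX u t + (Xh u - Xh s) * (X t - X u))
    (hXb : ∀ s t : ℝ, 0 < s → s < t → t ≤ T →
      |X t - X s| ≤ KX * s ^ (η₂ - (α + β)) * (t - s) ^ α)
    (hXhb : ∀ s t : ℝ, 0 < s → s < t → t ≤ T →
      |Xh t - Xh s| ≤ KX * s ^ (η₂ - (α + β)) * (t - s) ^ β)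
    (hXXb : ∀ s t : ℝ, 0 < s → s < t → t ≤ T →
      |XX s t| ≤ KX * s ^ (η₂ - (α + β)) * (t - s) ^ (α + β))
    (hY'b : ∀ s t : ℝ, 0 < s → s < t → t ≤ T →
      |Y' t - Y' s| ≤ KY * s ^ (η₁ - (γ + β)) * (t - s) ^ γ)
    (hRb : ∀ s t : ℝ, 0 < s → s < t → t ≤ T →
      |Y t - Y s - Y' s * (Xh t - Xh s)| ≤ KY * s ^ (η₁ - (γ + β)) * (t - s) ^ (γ + β))
    (hadd : ∀ s u t : ℝ, 0 < s → s ≤ u → u ≤ t → t ≤ T → I s u + I u t = I s t)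
    (hsew : ∀ s t : ℝ, 0 < s → s < t → t ≤ T →
      |I s t - Y s * (X t - X s) - Y' s * XX s t| ≤
        Csew * (KX * s ^ (η₂ - (α + β))) * (KY * s ^ (η₁ - (γ + β))) *
          (t - s) ^ (γ + β + α)) :
    ∀ t : ℝ, 0 < t → t ≤ T →
      ∃ L : ℝ, Tendsto (fun ε => I ε t) (nhdsWithin 0 (Ioi 0)) (nhds L) := by
  intro t ht htT
  have hβη₂ : β < η₂ := lt_of_le_of_lt (le_max_left β α) hη₂'
  have hαη₂ : α < η₂ := lt_of_le_of_lt (le_max_right β α) hη₂'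
  have he1 : η₁ - β ≠ 0 := sub_ne_zero.mpr hη₁β
  -- Step 1: bound on Y'
  have hY'step : ∀ s, 0 < s → s < T →
      |Y' s| ≤ |Y' (min (2 * s) T)| + KY * s ^ (η₁ - β) := by
    intro s hs hsT
    obtain ⟨s', hs'def⟩ : ∃ x : ℝ, x = min (2 * s) T := ⟨_, rfl⟩
    rw [← hs'def]
    have hss' : s < s' := by rw [hs'def]; exact lt_min (by linarith) hsT
    have hs'T : s' ≤ T := by rw [hs'def]; exact min_le_right _ _
    have hs's : s' - s ≤ s := by
      have h := min_le_left (2 * s) T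
      rw [← hs'def] at h
      linarith
    have h1 := hY'b s s' hs hss' hs'T
    have h2 : (s' - s) ^ γ ≤ s ^ γ :=
      Real.rpow_le_rpow (by linarith) hs's hγ.le
    have h3 : KY * s ^ (η₁ - (γ + β)) * (s' - s) ^ γ ≤ KY * s ^ (η₁ - β) := by
      calc KY * s ^ (η₁ - (γ + β)) * (s' - s) ^ γ
          ≤ KY * s ^ (η₁ - (γ + β)) * s ^ γ :=
            mul_le_mul_of_nonneg_left h2 (mul_nonneg hKY (Real.rpow_nonneg hs.le _))
        _ = KY * s ^ (η₁ - β) := by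
            rw [mul_assoc, ← Real.rpow_add hs]
            have : η₁ - (γ + β) + γ = η₁ - β := by ring
            rw [this]
    have h4 := abs_le_abs_add_abs_sub (Y' s) (Y' s')
    linarith
  obtain ⟨C1, hC10, hC1⟩ := dyadic_bound hT he1 hKY Y' hY'step
  -- exponents
  obtain ⟨δ, hδdef⟩ : ∃ x : ℝ, x = min (η₂ - β) (min (η₂ - β + η₁) (2 * (η₂ - β) + η₁ - α)) / 2 := ⟨_, rfl⟩
  have hsum2 : 0 < η₂ - β + η₁ := by linarith
  have hδ : 0 < δ := by
    rw [hδdef]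
    apply div_pos _ two_pos
    exact lt_min (by linarith) (lt_min hsum2 hmix)
  have h2δa : 2 * δ ≤ η₂ - β := by
    have h := min_le_left (η₂ - β) (min (η₂ - β + η₁) (2 * (η₂ - β) + η₁ - α))
    rw [hδdef]; linarith
  have h2δb : 2 * δ ≤ η₂ - β + η₁ := by
    have h := (min_le_right (η₂ - β) (min (η₂ - β + η₁) (2 * (η₂ - β) + η₁ - α))).trans
      (min_le_left (η₂ - β + η₁) (2 * (η₂ - β) + η₁ - α))
    rw [hδdef]; linarith
  have h2δc : 2 * δ ≤ 2 * (η₂ - β) + η₁ - α := by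
    have h := (min_le_right (η₂ - β) (min (η₂ - β + η₁) (2 * (η₂ - β) + η₁ - α))).trans
      (min_le_right (η₂ - β + η₁) (2 * (η₂ - β) + η₁ - α))
    rw [hδdef]; linarith
  obtain ⟨eY, heYdef⟩ : ∃ x : ℝ, x = min 0 (min η₁ (η₂ - α + η₁ - β)) - δ := ⟨_, rfl⟩
  have heY_le_0 : eY ≤ -δ := by
    have h := min_le_left (0:ℝ) (min η₁ (η₂ - α + η₁ - β))
    rw [heYdef]; linarith
  have heY_le_η₁ : eY ≤ η₁ - δ := by
    have h := (min_le_right (0:ℝ) (min η₁ (η₂ - α + η₁ - β))).trans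
      (min_le_left η₁ (η₂ - α + η₁ - β))
    rw [heYdef]; linarith
  have heY_le_ρ : eY ≤ η₂ - α + η₁ - β - δ := by
    have h := (min_le_right (0:ℝ) (min η₁ (η₂ - α + η₁ - β))).trans
      (min_le_right η₁ (η₂ - α + η₁ - β))
    rw [heYdef]; linarith
  have heY0 : eY < 0 := by linarith
  have heY_lb : δ ≤ η₂ - β + eY := by
    have hm_lb : 2 * δ - (η₂ - β) ≤ min 0 (min η₁ (η₂ - α + η₁ - β)) :=
      le_min (by linarith) (le_min (by linarith) (by linarith))
    rw [heYdef]; linarith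
  obtain ⟨θ, hθdef⟩ : ∃ x : ℝ, x = min (η₂ - β + eY) (min η₂ (η₂ + η₁ - β)) := ⟨_, rfl⟩
  have hθpos : 0 < θ := by
    rw [hθdef]
    exact lt_min (by linarith) (lt_min (by linarith) (by linarith))
  have hθa : θ ≤ η₂ - β + eY := by rw [hθdef]; exact min_le_left _ _
  have hθb : θ ≤ η₂ := by
    rw [hθdef]; exact (min_le_right _ _).trans (min_le_left _ _)
  have hθd : θ ≤ η₂ + η₁ - β := by
    rw [hθdef]; exact (min_le_right _ _).trans (min_le_right _ _)
  -- Step 2: bound on Y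
  obtain ⟨K2, hK2def⟩ : ∃ x : ℝ, x = KY * T ^ (η₁ - (γ + β) + (γ + β) - eY)
      + C1 * KX * (T ^ (η₂ - (α + β) + β - eY) + T ^ (η₁ - β + (η₂ - (α + β)) + β - eY)) :=
    ⟨_, rfl⟩
  have hK20 : 0 ≤ K2 := by
    rw [hK2def]
    exact add_nonneg (mul_nonneg hKY (Real.rpow_nonneg hT.le _))
      (mul_nonneg (mul_nonneg hC10 hKX)
        (add_nonneg (Real.rpow_nonneg hT.le _) (Real.rpow_nonneg hT.le _)))
  have hYstep : ∀ s, 0 < s → s < T →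
      |Y s| ≤ |Y (min (2 * s) T)| + K2 * s ^ eY := by
    intro s hs hsT
    obtain ⟨s', hs'def⟩ : ∃ x : ℝ, x = min (2 * s) T := ⟨_, rfl⟩
    rw [← hs'def]
    have hss' : s < s' := by rw [hs'def]; exact lt_min (by linarith) hsT
    have hs'T : s' ≤ T := by rw [hs'def]; exact min_le_right _ _
    have hsT' : s ≤ T := hsT.le
    have hs's : s' - s ≤ s := by
      have h := min_le_left (2 * s) T
      rw [← hs'def] at h
      linarith
    have hinc : ∀ p : ℝ, 0 ≤ p → (s' - s) ^ p ≤ s ^ p := fun p hp =>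
      Real.rpow_le_rpow (by linarith) hs's hp
    have hR := hRb s s' hs hss' hs'T
    have hXh := hXhb s s' hs hss' hs'T
    have hY's := hC1 s hs hsT'
    have htri : |Y s' - Y s| ≤ |Y s' - Y s - Y' s * (Xh s' - Xh s)| + |Y' s| * |Xh s' - Xh s| := by
      have h1 : Y s' - Y s = (Y s' - Y s - Y' s * (Xh s' - Xh s)) + Y' s * (Xh s' - Xh s) := by
        ring
      calc |Y s' - Y s|
          = |(Y s' - Y s - Y' s * (Xh s' - Xh s)) + Y' s * (Xh s' - Xh s)| := by rw [← h1]
        _ ≤ |Y s' - Y s - Y' s * (Xh s' - Xh s)| + |Y' s * (Xh s' - Xh s)| := abs_add_le _ _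
        _ = |Y s' - Y s - Y' s * (Xh s' - Xh s)| + |Y' s| * |Xh s' - Xh s| := by rw [abs_mul]
    have hstep2 : |Y s' - Y s| ≤ K2 * s ^ eY := by
      have hc1p : 0 ≤ C1 * (1 + s ^ (η₁ - β)) :=
        mul_nonneg hC10 (by positivity)
      calc |Y s' - Y s|
          ≤ |Y s' - Y s - Y' s * (Xh s' - Xh s)| + |Y' s| * |Xh s' - Xh s| := htri
        _ ≤ KY * s ^ (η₁ - (γ + β)) * (s' - s) ^ (γ + β)
            + (C1 * (1 + s ^ (η₁ - β))) * (KX * s ^ (η₂ - (α + β)) * (s' - s) ^ β) :=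
            add_le_add hR (mul_le_mul hY's hXh (abs_nonneg _) hc1p)
        _ ≤ KY * s ^ (η₁ - (γ + β)) * s ^ (γ + β)
            + (C1 * (1 + s ^ (η₁ - β))) * (KX * s ^ (η₂ - (α + β)) * s ^ β) := by
            apply add_le_add
            · exact mul_le_mul_of_nonneg_left (hinc _ (by linarith))
                (mul_nonneg hKY (Real.rpow_nonneg hs.le _))
            · exact mul_le_mul_of_nonneg_left
                (mul_le_mul_of_nonneg_left (hinc β hβ.le)
                  (mul_nonneg hKX (Real.rpow_nonneg hs.le _))) hc1p
        _ = KY * (s ^ (η₁ - (γ + β)) * s ^ (γ + β))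
            + C1 * KX * (s ^ (η₂ - (α + β)) * s ^ β)
            + C1 * KX * (s ^ (η₁ - β) * s ^ (η₂ - (α + β)) * s ^ β) := by ring
        _ ≤ KY * (T ^ (η₁ - (γ + β) + (γ + β) - eY) * s ^ eY)
            + C1 * KX * (T ^ (η₂ - (α + β) + β - eY) * s ^ eY)
            + C1 * KX * (T ^ (η₁ - β + (η₂ - (α + β)) + β - eY) * s ^ eY) := by
            apply add_le_add (add_le_add ?_ ?_) ?_
            · exact mul_le_mul_of_nonneg_left (collapse2 hs hsT' (by linarith)) hKY
            · exact mul_le_mul_of_nonneg_left (collapse2 hs hsT' (by linarith))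
                (mul_nonneg hC10 hKX)
            · exact mul_le_mul_of_nonneg_left (collapse3 hs hsT' (by linarith))
                (mul_nonneg hC10 hKX)
        _ = K2 * s ^ eY := by rw [hK2def]; ring
    have h4 := abs_le_abs_add_abs_sub (Y s) (Y s')
    linarith
  obtain ⟨C2, hC20, hC2⟩ := dyadic_bound hT (ne_of_lt heY0) hK20 Y hYstep
  obtain ⟨C3, hC3def⟩ : ∃ x : ℝ, x = C2 * (T ^ (-eY) + 1) := ⟨_, rfl⟩
  have hC30 : 0 ≤ C3 := by
    rw [hC3def]
    exact mul_nonneg hC20 (by positivity)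
  have hYbd : ∀ s, 0 < s → s ≤ T → |Y s| ≤ C3 * s ^ eY := by
    intro s hs hsT
    have h1 := hC2 s hs hsT
    have h2 : (1:ℝ) ≤ T ^ (-eY) * s ^ eY := by
      have h0 : -eY + eY = 0 := by ring
      have h3 : (1:ℝ) = s ^ (-eY) * s ^ eY := by
        rw [← Real.rpow_add hs, h0, Real.rpow_zero]
      rw [h3]
      exact mul_le_mul_of_nonneg_right
        (Real.rpow_le_rpow hs.le hsT (by linarith)) (Real.rpow_nonneg hs.le _)
    calc |Y s| ≤ C2 * (1 + s ^ eY) := h1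
      _ ≤ C2 * (T ^ (-eY) * s ^ eY + s ^ eY) := by
          apply mul_le_mul_of_nonneg_left _ hC20
          linarith
      _ = C3 * s ^ eY := by rw [hC3def]; ring
  -- Step 3: single dyadic interval bound
  obtain ⟨M, hMdef⟩ : ∃ x : ℝ, x = C3 * KX * T ^ (eY + (η₂ - (α + β)) + α - θ)
      + C1 * KX * (T ^ (η₂ - (α + β) + (α + β) - θ)
        + T ^ (η₁ - β + (η₂ - (α + β)) + (α + β) - θ))
      + Csew * KX * KY * T ^ (η₂ - (α + β) + (η₁ - (γ + β)) + (γ + β + α) - θ) :=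
    ⟨_, rfl⟩
  have hM0 : 0 ≤ M := by
    rw [hMdef]
    exact add_nonneg (add_nonneg
      (mul_nonneg (mul_nonneg hC30 hKX) (Real.rpow_nonneg hT.le _))
      (mul_nonneg (mul_nonneg hC10 hKX)
        (add_nonneg (Real.rpow_nonneg hT.le _) (Real.rpow_nonneg hT.le _))))
      (mul_nonneg (mul_nonneg (mul_nonneg hCsew hKX) hKY) (Real.rpow_nonneg hT.le _))
  have hsingle : ∀ a b : ℝ, 0 < a → a < b → b ≤ 2 * a → b ≤ T → |I a b| ≤ M * a ^ θ := by
    intro a b ha hab hb2a hbT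
    have haT : a ≤ T := le_trans hab.le hbT
    have hba : b - a ≤ a := by linarith
    have hinc : ∀ p : ℝ, 0 ≤ p → (b - a) ^ p ≤ a ^ p := fun p hp =>
      Real.rpow_le_rpow (by linarith) hba hp
    have h1 := hsew a b ha hab hbT
    have h2 := hXb a b ha hab hbT
    have h3 := hXXb a b ha hab hbT
    have h4 := hYbd a ha haT
    have h5 := hC1 a ha haT
    have htri : |I a b| ≤ |I a b - Y a * (X b - X a) - Y' a * XX a b|
        + |Y a| * |X b - X a| + |Y' a| * |XX a b| := by
      have hid : I a b = (I a b - Y a * (X b - X a) - Y' a * XX a b)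
          + Y a * (X b - X a) + Y' a * XX a b := by ring
      have hrw := abs_add_le ((I a b - Y a * (X b - X a) - Y' a * XX a b)
          + Y a * (X b - X a)) (Y' a * XX a b)
      have hrw2 := abs_add_le (I a b - Y a * (X b - X a) - Y' a * XX a b) (Y a * (X b - X a))
      rw [← hid] at hrw
      rw [abs_mul] at hrw2
      have hrw3 := abs_mul (Y' a) (XX a b)
      linarith
    -- term A
    have hTA : |Y a| * |X b - X a|
        ≤ C3 * KX * (T ^ (eY + (η₂ - (α + β)) + α - θ) * a ^ θ) := by
      have h2' : |X b - X a| ≤ KX * a ^ (η₂ - (α + β)) * a ^ α :=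
        h2.trans (mul_le_mul_of_nonneg_left (hinc α hα.le)
          (mul_nonneg hKX (Real.rpow_nonneg ha.le _)))
      calc |Y a| * |X b - X a|
          ≤ (C3 * a ^ eY) * (KX * a ^ (η₂ - (α + β)) * a ^ α) :=
            mul_le_mul h4 h2' (abs_nonneg _)
              (mul_nonneg hC30 (Real.rpow_nonneg ha.le _))
        _ = C3 * KX * (a ^ eY * a ^ (η₂ - (α + β)) * a ^ α) := by ring
        _ ≤ C3 * KX * (T ^ (eY + (η₂ - (α + β)) + α - θ) * a ^ θ) :=
            mul_le_mul_of_nonneg_left (collapse3 ha haT (by linarith))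
              (mul_nonneg hC30 hKX)
    -- term B
    have hTB : |Y' a| * |XX a b|
        ≤ C1 * KX * (T ^ (η₂ - (α + β) + (α + β) - θ) * a ^ θ)
          + C1 * KX * (T ^ (η₁ - β + (η₂ - (α + β)) + (α + β) - θ) * a ^ θ) := by
      have hc1p : 0 ≤ C1 * (1 + a ^ (η₁ - β)) := mul_nonneg hC10 (by positivity)
      have h3' : |XX a b| ≤ KX * a ^ (η₂ - (α + β)) * a ^ (α + β) :=
        h3.trans (mul_le_mul_of_nonneg_left (hinc (α + β) (by linarith))
          (mul_nonneg hKX (Real.rpow_nonneg ha.le _)))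
      calc |Y' a| * |XX a b|
          ≤ (C1 * (1 + a ^ (η₁ - β))) * (KX * a ^ (η₂ - (α + β)) * a ^ (α + β)) :=
            mul_le_mul h5 h3' (abs_nonneg _) hc1p
        _ = C1 * KX * (a ^ (η₂ - (α + β)) * a ^ (α + β))
            + C1 * KX * (a ^ (η₁ - β) * a ^ (η₂ - (α + β)) * a ^ (α + β)) := by ring
        _ ≤ C1 * KX * (T ^ (η₂ - (α + β) + (α + β) - θ) * a ^ θ)
            + C1 * KX * (T ^ (η₁ - β + (η₂ - (α + β)) + (α + β) - θ) * a ^ θ) := by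
            apply add_le_add
            · exact mul_le_mul_of_nonneg_left (collapse2 ha haT (by linarith))
                (mul_nonneg hC10 hKX)
            · exact mul_le_mul_of_nonneg_left (collapse3 ha haT (by linarith))
                (mul_nonneg hC10 hKX)
    -- term C
    have hTC : |I a b - Y a * (X b - X a) - Y' a * XX a b|
        ≤ Csew * KX * KY * (T ^ (η₂ - (α + β) + (η₁ - (γ + β)) + (γ + β + α) - θ) * a ^ θ) := by
      have hcf : 0 ≤ Csew * (KX * a ^ (η₂ - (α + β))) * (KY * a ^ (η₁ - (γ + β))) :=
        mul_nonneg (mul_nonneg hCsew (mul_nonneg hKX (Real.rpow_nonneg ha.le _)))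
          (mul_nonneg hKY (Real.rpow_nonneg ha.le _))
      calc |I a b - Y a * (X b - X a) - Y' a * XX a b|
          ≤ Csew * (KX * a ^ (η₂ - (α + β))) * (KY * a ^ (η₁ - (γ + β)))
              * (b - a) ^ (γ + β + α) := h1
        _ ≤ Csew * (KX * a ^ (η₂ - (α + β))) * (KY * a ^ (η₁ - (γ + β)))
              * a ^ (γ + β + α) :=
            mul_le_mul_of_nonneg_left (hinc _ (by linarith)) hcf
        _ = Csew * KX * KY * (a ^ (η₂ - (α + β)) * a ^ (η₁ - (γ + β)) * a ^ (γ + β + α)) := by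
            ring
        _ ≤ Csew * KX * KY * (T ^ (η₂ - (α + β) + (η₁ - (γ + β)) + (γ + β + α) - θ) * a ^ θ) :=
            mul_le_mul_of_nonneg_left (collapse3 ha haT (by linarith))
              (mul_nonneg (mul_nonneg hCsew hKX) hKY)
    calc |I a b| ≤ |I a b - Y a * (X b - X a) - Y' a * XX a b|
        + |Y a| * |X b - X a| + |Y' a| * |XX a b| := htri
      _ ≤ Csew * KX * KY * (T ^ (η₂ - (α + β) + (η₁ - (γ + β)) + (γ + β + α) - θ) * a ^ θ)
          + C3 * KX * (T ^ (eY + (η₂ - (α + β)) + α - θ) * a ^ θ)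
          + (C1 * KX * (T ^ (η₂ - (α + β) + (α + β) - θ) * a ^ θ)
            + C1 * KX * (T ^ (η₁ - β + (η₂ - (α + β)) + (α + β) - θ) * a ^ θ)) :=
          add_le_add (add_le_add hTC hTA) hTB
      _ = M * a ^ θ := by rw [hMdef]; ring
  -- Step 4: dyadic summation
  have hr1 : (2:ℝ) ^ (-θ) < 1 :=
    Real.rpow_lt_one_of_one_lt_of_neg one_lt_two (by linarith)
  have hr0 : (0:ℝ) < (2:ℝ) ^ (-θ) := Real.rpow_pos_of_pos two_pos _
  obtain ⟨M', hM'def⟩ : ∃ x : ℝ, x = M / (1 - (2:ℝ) ^ (-θ)) := ⟨_, rfl⟩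
  have hM'0 : 0 ≤ M' := by
    rw [hM'def]; exact div_nonneg hM0 (by linarith)
  have hkey2 : M' * (1 - (2:ℝ) ^ (-θ)) = M := by
    rw [hM'def]; exact div_mul_cancel₀ M (ne_of_gt (by linarith))
  have hexpand : M' * (1 - (2:ℝ) ^ (-θ)) = M' - M' * (2:ℝ) ^ (-θ) := by ring
  have hMM' : M ≤ M' := by
    have h1 : 0 ≤ M' * (2:ℝ) ^ (-θ) := mul_nonneg hM'0 hr0.le
    linarith
  have hstep1 : (M' + M) * (2:ℝ) ^ (-θ) ≤ M' := by
    have e2 : M * (2:ℝ) ^ (-θ) ≤ M := mul_le_of_le_one_right hM0 hr1.le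
    have e3 : (M' + M) * (2:ℝ) ^ (-θ) = M' * (2:ℝ) ^ (-θ) + M * (2:ℝ) ^ (-θ) := by ring
    linarith
  have hmulti : ∀ n : ℕ, ∀ s u : ℝ, 0 < s → s < u → u ≤ T → u ≤ 2 ^ n * s →
      |I s u| ≤ M' * u ^ θ := by
    intro n
    induction n with
    | zero =>
      intro s u hs hsu huT hun
      simp only [pow_zero, one_mul] at hun
      linarith
    | succ n ih =>
      intro s u hs hsu huT hun
      by_cases h2s : u ≤ 2 * s
      · have hsg := hsingle s u hs hsu h2s huT
        calc |I s u| ≤ M * s ^ θ := hsg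
          _ ≤ M' * u ^ θ :=
            mul_le_mul hMM' (Real.rpow_le_rpow hs.le hsu.le hθpos.le)
              (Real.rpow_nonneg hs.le _) hM'0
      · push_neg at h2s
        have hm : s < u / 2 := by linarith
        have hm0 : 0 < u / 2 := by linarith
        have hmu : u / 2 < u := by linarith
        have hadd' := hadd s (u / 2) u hs (by linarith) (by linarith) huT
        have hA : |I s (u / 2)| ≤ M' * (u / 2) ^ θ := by
          apply ih s (u / 2) hs hm (by linarith)
          have hps : (2:ℝ) ^ (n + 1) * s = 2 * (2 ^ n * s) := by ring
          linarith
        have hB := hsingle (u / 2) u hm0 hmu (by linarith) huT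
        have htr : |I s u| ≤ |I s (u / 2)| + |I (u / 2) u| := by
          rw [← hadd']
          exact abs_add_le _ _
        have hpow : (u / 2 : ℝ) ^ θ = 2 ^ (-θ) * u ^ θ := by
          rw [Real.div_rpow (by linarith) (by norm_num : (0:ℝ) ≤ 2),
            Real.rpow_neg (by norm_num : (0:ℝ) ≤ 2)]
          ring
        have huθ : 0 ≤ u ^ θ := Real.rpow_nonneg (by linarith) _
        calc |I s u| ≤ |I s (u / 2)| + |I (u / 2) u| := htr
          _ ≤ M' * (u / 2) ^ θ + M * (u / 2) ^ θ := add_le_add hA hB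
          _ = ((M' + M) * 2 ^ (-θ)) * u ^ θ := by rw [hpow]; ring
          _ ≤ M' * u ^ θ := mul_le_mul_of_nonneg_right hstep1 huθ
  have hglobal : ∀ s u : ℝ, 0 < s → s < u → u ≤ T → |I s u| ≤ M' * u ^ θ := by
    intro s u hs hsu huT
    obtain ⟨n, hn⟩ := pow_unbounded_of_one_lt (u / s) one_lt_two
    refine hmulti n s u hs hsu huT ?_
    rw [div_lt_iff₀ hs] at hn
    linarith
  -- Step 5: convergence
  obtain ⟨a, hadef⟩ : ∃ x : ℕ → ℝ, x = fun n => t * (1 / 2 : ℝ) ^ n := ⟨_, rfl⟩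
  have ha_n : ∀ m : ℕ, a m = t * (1 / 2 : ℝ) ^ m := fun m => by rw [hadef]
  have ha_pos : ∀ n, 0 < a n := fun n => by
    rw [ha_n]; exact mul_pos ht (by positivity)
  have ha_le : ∀ n, a n ≤ t := by
    intro n
    have h1 : (1 / 2 : ℝ) ^ n ≤ 1 := pow_le_one₀ (by norm_num) (by norm_num)
    calc a n = t * (1 / 2 : ℝ) ^ n := ha_n n
      _ ≤ t * 1 := mul_le_mul_of_nonneg_left h1 ht.le
      _ = t := mul_one t
  have ha_anti : ∀ n, a (n + 1) < a n := by
    intro n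
    have h1 : (1 / 2 : ℝ) ^ (n + 1) < (1 / 2 : ℝ) ^ n := by
      have h2 : (0:ℝ) < (1 / 2 : ℝ) ^ n := by positivity
      calc (1 / 2 : ℝ) ^ (n + 1) = (1 / 2 : ℝ) ^ n * (1 / 2) := by ring
        _ < (1 / 2 : ℝ) ^ n * 1 := by linarith
        _ = (1 / 2 : ℝ) ^ n := mul_one _
    rw [ha_n, ha_n]
    exact mul_lt_mul_of_pos_left h1 ht
  obtain ⟨q, hqdef⟩ : ∃ x : ℝ, x = (1 / 2 : ℝ) ^ θ := ⟨_, rfl⟩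
  have hq1 : q < 1 := by
    rw [hqdef]; exact Real.rpow_lt_one (by norm_num) (by norm_num) hθpos
  have hq0 : 0 < q := by
    rw [hqdef]; exact Real.rpow_pos_of_pos (by norm_num) θ
  have ha_rpow : ∀ n, (a n) ^ θ = t ^ θ * q ^ n := by
    intro n
    have hhalf : (0:ℝ) ≤ 1 / 2 := by norm_num
    have h1 : ((1 / 2 : ℝ) ^ n) ^ θ = q ^ n := by
      rw [hqdef, ← Real.rpow_natCast (1 / 2 : ℝ) n, ← Real.rpow_mul hhalf, mul_comm,
        Real.rpow_mul hhalf, Real.rpow_natCast]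
    calc (a n) ^ θ = (t * (1 / 2 : ℝ) ^ n) ^ θ := by rw [ha_n]
      _ = t ^ θ * ((1 / 2 : ℝ) ^ n) ^ θ := Real.mul_rpow ht.le (by positivity)
      _ = t ^ θ * q ^ n := by rw [h1]
  obtain ⟨u, hudef⟩ : ∃ x : ℕ → ℝ, x = fun n => I (a n) t := ⟨_, rfl⟩
  have hdist : ∀ n, dist (u n) (u (n + 1)) ≤ (M' * t ^ θ) * q ^ n := by
    intro n
    have h1 := hadd (a (n + 1)) (a n) t (ha_pos (n + 1)) (ha_anti n).le (ha_le n) htT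
    have h2 : u n - u (n + 1) = -(I (a (n + 1)) (a n)) := by
      have hun : u n = I (a n) t := by rw [hudef]
      have hun1 : u (n + 1) = I (a (n + 1)) t := by rw [hudef]
      rw [hun, hun1]
      linarith
    have h3 := hglobal (a (n + 1)) (a n) (ha_pos (n + 1)) (ha_anti n)
      (le_trans (ha_le n) htT)
    rw [ha_rpow n] at h3
    calc dist (u n) (u (n + 1)) = |u n - u (n + 1)| := Real.dist_eq _ _
      _ = |I (a (n + 1)) (a n)| := by rw [h2, abs_neg]
      _ ≤ M' * (t ^ θ * q ^ n) := h3
      _ = (M' * t ^ θ) * q ^ n := by ring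
  have hcauchy : CauchySeq u := cauchySeq_of_le_geometric q (M' * t ^ θ) hq1 hdist
  obtain ⟨L, hL⟩ := cauchySeq_tendsto_of_complete hcauchy
  refine ⟨L, ?_⟩
  rw [Metric.tendsto_nhdsWithin_nhds]
  intro ε hε
  have hgeo : Tendsto (fun n => (M' * t ^ θ) * q ^ n) atTop (nhds 0) := by
    have h0 : Tendsto (fun n : ℕ => q ^ n) atTop (nhds 0) :=
      tendsto_pow_atTop_nhds_zero_of_lt_one hq0.le hq1
    have h1 := h0.const_mul (M' * t ^ θ)
    simpa using h1
  obtain ⟨N1, hN1⟩ := Metric.tendsto_atTop.mp hL (ε / 2) (by linarith)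
  obtain ⟨N2, hN2⟩ := Filter.eventually_atTop.mp
    (hgeo.eventually_lt_const (show (0:ℝ) < ε / 2 by linarith))
  obtain ⟨n, hndef⟩ : ∃ x : ℕ, x = max N1 N2 := ⟨_, rfl⟩
  refine ⟨a n, ha_pos n, ?_⟩
  intro x hx hdx
  have hx0 : 0 < x := hx
  have hxan : x < a n := by
    rw [Real.dist_eq, sub_zero] at hdx
    exact lt_of_le_of_lt (le_abs_self x) hdx
  have h5 := hadd x (a n) t hx0 hxan.le (ha_le n) htT
  have h6 := hglobal x (a n) hx0 hxan (le_trans (ha_le n) htT)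
  rw [ha_rpow n] at h6
  have h7 : dist (I x t) (u n) < ε / 2 := by
    have hid : I x t - u n = I x (a n) := by
      have hun : u n = I (a n) t := by rw [hudef]
      rw [hun]; linarith
    rw [Real.dist_eq, hid]
    have h8 : M' * (t ^ θ * q ^ n) = (M' * t ^ θ) * q ^ n := by ring
    have h9 := hN2 n (by rw [hndef]; exact le_max_right N1 N2)
    linarith
  have h10 := hN1 n (by rw [hndef]; exact le_max_left N1 N2)
  have h11 := dist_triangle (I x t) (u n) L
  calc dist (I x t) L ≤ dist (I x t) (u n) + dist (u n) L := h11
    _ < ε / 2 + ε / 2 := add_lt_add h7 h10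
    _ = ε := by ring
end

section
/- Let κ ∈ (0,8) and suppose the SLE_κ trace γ satisfies the moment bound E[|γ(t) − γ(s)|^q] ≤ C s^{−ζ/2}(t−s)^{(q+ζ)/2} for 0 < s < t < T, where q = q(r) = (1+κ/4)r − κr²/8 and ζ = ζ(r) = r − κr²/8 for some r with q(r) > 1 and ζ(r)+q(r) > 2. Then for any δ ∈ (1/q, (ζ+q)/(2q)) and any η > 0 with η < δ − ζ/(2q) and η ≤ δ − 1/q, the expectation E‖γ‖^q_{δ,q,η} of the singular Besov norm is finite. -/
/-!
Moving the expectation inside by Tonelli and applying the moment bound pointwise, the expected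
norm is at most `C` times the integral of `s ^ a * (t - s) ^ b` over `0 < s < t < T`, where
`a = -ζ/2 - q(η - α)` and `b = (q + ζ)/2 - 1 - δq`. The conditions on `η` and `δ` say exactly
that `a > -1` and `b > -1`, and the shear `(s, t) ↦ (s, t - s)` maps that region into the square
`(0, T)²`, on which the integral factors into two convergent one-dimensional ones.
-/

open Set MeasureTheory ENNReal

lemma setLIntegral_Ioo_zero_rpow_lt_top {c : ℝ} (hc : -1 < c) (T : ℝ) :
    ∫⁻ u in Ioo 0 T, ENNReal.ofReal (u ^ c) < ∞ :=
  ((intervalIntegrable_iff.1 (intervalIntegral.intervalIntegrable_rpow' hc)).mono_set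
    (Ioo_subset_Ioc_self.trans Ioc_subset_uIoc)).lintegral_lt_top

lemma setLIntegral_simplex_le_mul (T : ℝ) {f g : ℝ → ℝ≥0∞} (hf : Measurable f)
    (hg : Measurable g) :
    ∫⁻ p in {p : ℝ × ℝ | 0 < p.1 ∧ p.1 < p.2 ∧ p.2 < T}, f p.1 * g (p.2 - p.1)
      ≤ (∫⁻ s in Ioo 0 T, f s) * ∫⁻ u in Ioo 0 T, g u := by
  have hshear := measurePreserving_prod_sub (volume : Measure ℝ) (volume : Measure ℝ)
  rw [← Measure.volume_eq_prod] at hshear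
  calc _ ≤ ∫⁻ p in (fun z : ℝ × ℝ => (z.1, z.2 - z.1)) ⁻¹' (Ioo 0 T ×ˢ Ioo 0 T),
          f p.1 * g (p.2 - p.1) :=
        lintegral_mono_set <| by
          rintro p ⟨h1, h2, h3⟩
          exact ⟨⟨h1, by linarith⟩, sub_pos.2 h2, by linarith⟩
    _ = ∫⁻ z in Ioo 0 T ×ˢ Ioo 0 T, f z.1 * g z.2 :=
        hshear.setLIntegral_comp_preimage (f := fun z => f z.1 * g z.2)
          (measurableSet_Ioo.prod measurableSet_Ioo) (by fun_prop)
    _ = _ := by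
        rw [Measure.volume_eq_prod, ← Measure.prod_restrict,
          lintegral_prod_mul hf.aemeasurable hg.aemeasurable]

lemma setLIntegral_simplex_rpow_mul_rpow_lt_top {a b : ℝ} (ha : -1 < a) (hb : -1 < b) (T : ℝ) :
    ∫⁻ p in {p : ℝ × ℝ | 0 < p.1 ∧ p.1 < p.2 ∧ p.2 < T},
      ENNReal.ofReal (p.1 ^ a) * ENNReal.ofReal ((p.2 - p.1) ^ b) < ∞ :=
  (setLIntegral_simplex_le_mul T (by fun_prop) (by fun_prop)).trans_lt <|
    mul_lt_top (setLIntegral_Ioo_zero_rpow_lt_top ha T) (setLIntegral_Ioo_zero_rpow_lt_top hb T)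

lemma lintegral_ofReal_div_le {Ω : Type*} [MeasurableSpace Ω] {μ : Measure Ω} {X : Ω → ℝ}
    {M D : ℝ} (hX : ∫⁻ ω, ENNReal.ofReal (X ω) ∂μ ≤ ENNReal.ofReal M) (hD : 0 < D) :
    ∫⁻ ω, ENNReal.ofReal (X ω / D) ∂μ ≤ ENNReal.ofReal (M / D) := by
  simp_rw [ENNReal.ofReal_div_of_pos hD, div_eq_mul_inv]
  rw [lintegral_mul_const' _ _ (by simpa using hD)]
  exact mul_le_mul_left hX _

lemma mul_rpow_mul_rpow_div {s u : ℝ} (hs : 0 < s) (hu : 0 < u) (C a b c d : ℝ) :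
    C * s ^ a * u ^ b / (s ^ c * u ^ d) = C * (s ^ (a - c) * u ^ (b - d)) := by
  rw [Real.rpow_sub hs, Real.rpow_sub hu]
  field_simp

theorem sle_singular_besov_moment_general
    {Ω : Type*} [MeasurableSpace Ω] (μ : Measure Ω) [IsProbabilityMeasure μ]
    (T C q ζ δ η α : ℝ)
    (hq1 : 1 < q)
    (hαdef : α = δ - 1 / q)
    (hδ : δ ∈ Ioo (1 / q) ((ζ + q) / (2 * q)))
    (hη1 : η < δ - ζ / (2 * q))
    (γ : Ω → ℝ → ℂ)
    (hmeas : Measurable fun p : Ω × ℝ × ℝ => γ p.1 p.2.2 - γ p.1 p.2.1)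
    (hmom : ∀ s t : ℝ, 0 < s → s < t → t < T →
      (∫⁻ ω, ENNReal.ofReal (‖γ ω t - γ ω s‖ ^ q) ∂μ) ≤
        ENNReal.ofReal (C * s ^ (-ζ / 2) * (t - s) ^ ((q + ζ) / 2))) :
    (∫⁻ ω, (∫⁻ p in {p : ℝ × ℝ | 0 < p.1 ∧ p.1 < p.2 ∧ p.2 < T},
        ENNReal.ofReal (‖γ ω p.2 - γ ω p.1‖ ^ q /
          (p.1 ^ (q * (η - α)) * (p.2 - p.1) ^ (1 + δ * q)))) ∂μ) < ⊤ := by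
  have hq : 0 < q := by linarith
  have ha : -1 < -ζ / 2 - q * (η - α) := by
    have := mul_lt_mul_of_pos_left hη1 hq
    rw [mul_sub, mul_div_left_comm, div_mul_cancel_right₀ hq.ne'] at this
    rw [hαdef, mul_sub, mul_sub, mul_one_div_cancel hq.ne']
    linarith
  have hb : -1 < (q + ζ) / 2 - (1 + δ * q) := by
    have := mul_lt_mul_of_pos_left hδ.2 hq
    rw [mul_div_left_comm, div_mul_cancel_right₀ hq.ne'] at this
    linarith
  set S := {p : ℝ × ℝ | 0 < p.1 ∧ p.1 < p.2 ∧ p.2 < T}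
  set a := -ζ / 2 - q * (η - α)
  set b := (q + ζ) / 2 - (1 + δ * q)
  have hbound : ∀ p ∈ S, ∫⁻ ω, ENNReal.ofReal (‖γ ω p.2 - γ ω p.1‖ ^ q /
      (p.1 ^ (q * (η - α)) * (p.2 - p.1) ^ (1 + δ * q))) ∂μ
        ≤ ENNReal.ofReal C * (ENNReal.ofReal (p.1 ^ a) * ENNReal.ofReal ((p.2 - p.1) ^ b)) := by
    rintro ⟨s, t⟩ ⟨hs, hst, htT⟩
    have hu : 0 < t - s := sub_pos.2 hst
    rw [← ENNReal.ofReal_mul (by positivity), ← ENNReal.ofReal_mul' (by positivity),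
      ← mul_rpow_mul_rpow_div hs hu]
    exact lintegral_ofReal_div_le (hmom s t hs hst htT) (by positivity)
  rw [lintegral_lintegral_swap (by fun_prop)]
  calc _ ≤ ∫⁻ p in S, ENNReal.ofReal C *
          (ENNReal.ofReal (p.1 ^ a) * ENNReal.ofReal ((p.2 - p.1) ^ b)) :=
        setLIntegral_mono (by fun_prop) hbound
    _ = ENNReal.ofReal C *
          ∫⁻ p in S, ENNReal.ofReal (p.1 ^ a) * ENNReal.ofReal ((p.2 - p.1) ^ b) :=
        lintegral_const_mul' _ _ ofReal_ne_top
    _ < ⊤ := mul_lt_top ofReal_lt_top (setLIntegral_simplex_rpow_mul_rpow_lt_top ha hb T)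

/-- Finiteness of the expected singular Besov norm of the SLE trace, given
the moment bound `E[|γ_t − γ_s|^q] ≤ C s^{−ζ/2}(t−s)^{(q+ζ)/2}`. -/
theorem sle_singular_besov_moment
    {Ω : Type*} [MeasurableSpace Ω] (μ : Measure Ω) [IsProbabilityMeasure μ]
    (κ T C r q ζ δ η α : ℝ)
    (hκ : κ ∈ Ioo (0:ℝ) 8) (hT : 0 < T) (hC : 0 ≤ C)
    (hqdef : q = (1 + κ / 4) * r - κ * r ^ 2 / 8)
    (hζdef : ζ = r - κ * r ^ 2 / 8)
    (hq1 : 1 < q) (hζq : 2 < ζ + q)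
    (hαdef : α = δ - 1 / q)
    (hδ : δ ∈ Ioo (1 / q) ((ζ + q) / (2 * q)))
    (hη0 : 0 < η) (hη1 : η < δ - ζ / (2 * q)) (hη2 : η ≤ δ - 1 / q)
    (γ : Ω → ℝ → ℂ)
    (hmeas : Measurable fun p : Ω × ℝ × ℝ => γ p.1 p.2.2 - γ p.1 p.2.1)
    (hmom : ∀ s t : ℝ, 0 < s → s < t → t < T →
      (∫⁻ ω, ENNReal.ofReal (‖γ ω t - γ ω s‖ ^ q) ∂μ) ≤
        ENNReal.ofReal (C * s ^ (-ζ / 2) * (t - s) ^ ((q + ζ) / 2))) :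
    (∫⁻ ω, (∫⁻ p in {p : ℝ × ℝ | 0 < p.1 ∧ p.1 < p.2 ∧ p.2 < T},
        ENNReal.ofReal (‖γ ω p.2 - γ ω p.1‖ ^ q /
          (p.1 ^ (q * (η - α)) * (p.2 - p.1) ^ (1 + δ * q)))) ∂μ) < ⊤ :=
  sle_singular_besov_moment_general μ T C q ζ δ η α hq1 hαdef hδ hη1 γ hmeas hmom
end

section
/- For κ ∈ (0,8), the function r ↦ (ζ(r)+q(r)−2)/(2q(r)), with q(r) = (1+κ/4)r − κr²/8 and ζ(r) = r − κr²/8, attains its maximum on the interval (1, 1/2 + 4/κ) at r* = (−8 + 4√(8+κ))/κ, and the maximal value equals α*(κ) = 1 − κ/(24 + 2κ − 8√(κ+8)). -/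
/-!
Since `q - ζ = κ r / 4`, the exponent equals `1 - (κ r + 8) / (8 q(r))`. Writing `s = √(κ + 8)`
and `u = κ r + 8`, one has `κ · 8 q(r) = 2 (s - 2)² u - (u - 4 s)²`, so
`(κ r + 8) / (8 q(r)) ≥ κ / (2 (s - 2)²)`, with equality exactly when `u = 4 s`, i.e. at `r = r*`;
and `2 (s - 2)² = 24 + 2 κ - 8 s`.
-/

open Set

namespace SLEExponent

noncomputable def q (κ r : ℝ) : ℝ := (1 + κ / 4) * r - κ * r ^ 2 / 8

noncomputable def ζ (κ r : ℝ) : ℝ := r - κ * r ^ 2 / 8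

noncomputable def exponent (κ r : ℝ) : ℝ := (ζ κ r + q κ r - 2) / (2 * q κ r)

variable {κ r s : ℝ}

theorem q_pos (hr : 0 < r) (hκr : κ * r < 2 * κ + 8) : 0 < q κ r := by
  have : q κ r = r * (2 * κ + 8 - κ * r) / 8 := by unfold q; ring
  rw [this]
  exact div_pos (mul_pos hr (by linarith)) (by norm_num)

theorem exponent_eq_one_sub (hq : q κ r ≠ 0) :
    exponent κ r = 1 - (κ * r + 8) / (8 * q κ r) := by
  unfold exponent
  field_simp
  unfold q ζ
  ring

theorem mul_q_eq_sub_sq (hs : s ^ 2 = κ + 8) :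
    κ * (8 * q κ r) = 2 * (s - 2) ^ 2 * (κ * r + 8) - (κ * r + 8 - 4 * s) ^ 2 := by
  have hκ : κ = s ^ 2 - 8 := by linarith
  subst hκ
  unfold q
  ring

theorem two_mul_sub_two_sq (hs : s ^ 2 = κ + 8) : 2 * (s - 2) ^ 2 = 24 + 2 * κ - 8 * s := by
  linear_combination 2 * hs

theorem exponent_le (hs : s ^ 2 = κ + 8) (hs2 : s ≠ 2) (hq : 0 < q κ r) :
    exponent κ r ≤ 1 - κ / (24 + 2 * κ - 8 * s) := by
  have hd : 0 < 2 * (s - 2) ^ 2 := by have := sub_ne_zero.2 hs2; positivity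
  rw [exponent_eq_one_sub hq.ne', ← two_mul_sub_two_sq hs, sub_le_sub_iff_left,
    div_le_div_iff₀ hd (by positivity)]
  linarith [mul_q_eq_sub_sq (r := r) hs, sq_nonneg (κ * r + 8 - 4 * s)]

theorem exponent_eq_of_mul_add_eq (hs : s ^ 2 = κ + 8) (hs0 : s ≠ 0) (hs2 : s ≠ 2)
    (hr : κ * r + 8 = 4 * s) : exponent κ r = 1 - κ / (24 + 2 * κ - 8 * s) := by
  have hq := mul_q_eq_sub_sq (r := r) hs
  rw [hr, sub_self, zero_pow two_ne_zero, sub_zero] at hq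
  have hd : 2 * (s - 2) ^ 2 ≠ 0 := by have := sub_ne_zero.2 hs2; positivity
  have h8q : 8 * q κ r ≠ 0 := by
    refine right_ne_zero_of_mul (a := κ) ?_
    rw [hq]
    positivity
  rw [exponent_eq_one_sub (right_ne_zero_of_mul h8q), ← two_mul_sub_two_sq hs, hr]
  congr 1
  rw [div_eq_div_iff h8q hd]
  linear_combination -hq

end SLEExponent

open SLEExponent

/-- Optimisation of the SLE Hölder exponent: the function
`r ↦ (ζ(r)+q(r)−2)/(2q(r))` attains its maximum over `(1, 1/2+4/κ)` at
`r* = (−8+4√(8+κ))/κ`, with maximal value `α*(κ) = 1 − κ/(24+2κ−8√(κ+8))`. -/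
theorem sle_exponent_optimisation (κ : ℝ) (hκ : κ ∈ Ioo (0:ℝ) 8) :
    ((-8 + 4 * Real.sqrt (8 + κ)) / κ) ∈ Ioo (1:ℝ) (1 / 2 + 4 / κ) ∧
    (∀ r ∈ Ioo (1:ℝ) (1 / 2 + 4 / κ),
      ((r - κ * r ^ 2 / 8) + ((1 + κ / 4) * r - κ * r ^ 2 / 8) - 2) /
          (2 * ((1 + κ / 4) * r - κ * r ^ 2 / 8)) ≤
        (let r' := (-8 + 4 * Real.sqrt (8 + κ)) / κ;
          ((r' - κ * r' ^ 2 / 8) + ((1 + κ / 4) * r' - κ * r' ^ 2 / 8) - 2) /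
            (2 * ((1 + κ / 4) * r' - κ * r' ^ 2 / 8)))) ∧
    (let r' := (-8 + 4 * Real.sqrt (8 + κ)) / κ;
      ((r' - κ * r' ^ 2 / 8) + ((1 + κ / 4) * r' - κ * r' ^ 2 / 8) - 2) /
          (2 * ((1 + κ / 4) * r' - κ * r' ^ 2 / 8)) =
        1 - κ / (24 + 2 * κ - 8 * Real.sqrt (κ + 8))) := by
  obtain ⟨hκ0, hκ8⟩ := hκ
  rw [add_comm 8 κ]
  set s := Real.sqrt (κ + 8)
  have hs : s ^ 2 = κ + 8 := Real.sq_sqrt (by linarith)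
  have hs2 : 2 < s := by nlinarith [Real.sqrt_nonneg (κ + 8)]
  have hs4 : s < 4 := by nlinarith
  have hopt : κ * ((-8 + 4 * s) / κ) + 8 = 4 * s := by field_simp; ring
  have hval : exponent κ ((-8 + 4 * s) / κ) = 1 - κ / (24 + 2 * κ - 8 * s) :=
    exponent_eq_of_mul_add_eq hs (by linarith) hs2.ne' hopt
  refine ⟨⟨?_, ?_⟩, fun r ⟨hr1, hr⟩ => ?_, hval⟩
  · rw [lt_div_iff₀ hκ0]; nlinarith
  · rw [div_lt_iff₀ hκ0, add_mul, div_mul_cancel₀ _ hκ0.ne']; nlinarith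
  · have hκr : κ * r < κ * (1 / 2 + 4 / κ) := mul_lt_mul_of_pos_left hr hκ0
    rw [mul_add, mul_div_cancel₀ _ hκ0.ne'] at hκr
    exact (exponent_le hs hs2.ne' (q_pos (by linarith) (by linarith))).trans_eq hval.symm
end

section
/- Let 0 < α < 1, 0 < η < 1/2 with η ≤ α and α/η ≤ 2. If a path γ : (0,1] → ℂ belongs to the singular Hölder space C^{α,η}((0,1]; ℂ), then the reparametrization t ↦ γ(t²) extends to an α-Hölder continuous function on [0,1]. -/
/-!
For `s < t ≤ 2s` the singular bound gives
`‖γ(t²) - γ(s²)‖ ≤ K s^{2(η-α)} (t² - s²)^α ≤ 3^α K s^{2η-α} (t - s)^α`, and `s^{2η-α} ≤ 1`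
since `α ≤ 2η`. Far-apart points are joined through the dyadic chain `t, t/2, t/4, …`, along
which these local bounds telescope to `≲ t^α ≲ (t - s)^α`. The resulting Hölder bound on `(0,1]`
makes `t ↦ γ(t²)` uniformly continuous, so it extends to `0` by completeness of `ℂ`.
-/

open Set Filter Topology

section HolderOnInterval

variable {E : Type*} [SeminormedAddCommGroup E] {f : ℝ → E} {A C α b : ℝ}

lemma uniformContinuousOn_of_norm_sub_le_rpow {S : Set ℝ} (hα : 0 < α)
    (hf : ∀ s ∈ S, ∀ t ∈ S, ‖f t - f s‖ ≤ C * |t - s| ^ α) : UniformContinuousOn f S := by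
  rw [Metric.uniformContinuousOn_iff_le]
  intro ε hε
  have hmod : Tendsto (fun d : ℝ => C * d ^ α) (𝓝 0) (𝓝 0) := by
    simpa [Real.zero_rpow hα.ne'] using
      (Real.continuousAt_rpow_const 0 α (Or.inr hα.le)).tendsto.const_mul C
  obtain ⟨δ, hδ, hsmall⟩ := Metric.eventually_nhds_iff.1 (hmod.eventually (eventually_le_nhds hε))
  refine ⟨δ / 2, half_pos hδ, fun x hx y hy hxy => ?_⟩
  rw [Real.dist_eq] at hxy
  rw [dist_eq_norm]
  refine (hf y hy x hx).trans (hsmall ?_)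
  rw [Real.dist_eq, sub_zero, abs_abs]
  linarith

lemma exists_extend_Icc_of_norm_sub_le_rpow [CompleteSpace E] {a : ℝ} (hab : a < b) (hα : 0 < α)
    (hf : ∀ s ∈ Ioc a b, ∀ t ∈ Ioc a b, ‖f t - f s‖ ≤ C * |t - s| ^ α) :
    ∃ g : ℝ → E, (∀ t ∈ Ioc a b, g t = f t) ∧
      ∀ s ∈ Icc a b, ∀ t ∈ Icc a b, ‖g t - g s‖ ≤ C * |t - s| ^ α := by
  have := left_nhdsWithin_Ioc_neBot hab
  obtain ⟨L, hL⟩ := CompleteSpace.complete <|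
    (cauchy_nhds.mono (nhdsWithin_le_nhds (a := a))).map_of_le
      (uniformContinuousOn_of_norm_sub_le_rpow hα hf) inf_le_right
  have hendpoint : ∀ t ∈ Ioc a b, ‖f t - L‖ ≤ C * |t - a| ^ α := fun t ht =>
    le_of_tendsto_of_tendsto ((tendsto_const_nhds.sub hL).norm)
      (((continuous_const.sub continuous_id).abs.rpow_const fun _ => Or.inr hα.le).const_mul C
        |>.continuousWithinAt.tendsto)
      (eventually_nhdsWithin_of_forall fun s hs => hf s hs t ht)
  refine ⟨Function.update f a L, fun t ht => Function.update_of_ne ht.1.ne' _ _, ?_⟩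
  intro s hs t ht
  rcases eq_or_lt_of_le hs.1 with rfl | hs' <;> rcases eq_or_lt_of_le ht.1 with rfl | ht'
  · simp [Real.zero_rpow hα.ne']
  · simpa [ht'.ne'] using hendpoint t ⟨ht', ht.2⟩
  · simpa [hs'.ne', norm_sub_rev, abs_sub_comm] using hendpoint s ⟨hs', hs.2⟩
  · simpa [hs'.ne', ht'.ne'] using hf s ⟨hs', hs.2⟩ t ⟨ht', ht.2⟩

lemma norm_sub_div_two_pow_le (hα : 0 < α) (hA : 0 ≤ A)
    (hloc : ∀ s t, 0 < s → s ≤ t → t ≤ 2 * s → t ≤ b → ‖f t - f s‖ ≤ A * (t - s) ^ α)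
    {t : ℝ} (ht : 0 < t) (htb : t ≤ b) (n : ℕ) :
    ‖f t - f (t / 2 ^ n)‖ ≤ A / (2 ^ α - 1) * t ^ α := by
  set D := A / (2 ^ α - 1)
  have h2α : 0 < (2 : ℝ) ^ α - 1 := by linarith [Real.one_lt_rpow one_lt_two hα]
  have hstep : ∀ u, 0 < u → u ≤ b → ‖f u - f (u / 2)‖ ≤ D * u ^ α - D * (u / 2) ^ α := by
    intro u hu hub
    have hsplit : u ^ α = 2 ^ α * (u / 2) ^ α := by
      rw [← Real.mul_rpow zero_le_two (by positivity), mul_div_cancel₀ u two_ne_zero]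
    calc ‖f u - f (u / 2)‖ ≤ A * (u - u / 2) ^ α :=
          hloc _ _ (by positivity) (by linarith) (by linarith) hub
      _ = D * u ^ α - D * (u / 2) ^ α := by
          rw [hsplit, sub_half]
          linear_combination (-(u / 2) ^ α) * (div_mul_cancel₀ A h2α.ne')
  have hchain := dist_le_range_sum_of_dist_le (f := fun k : ℕ => f (t / 2 ^ k))
    (d := fun k => D * (t / 2 ^ k) ^ α - D * (t / 2 ^ (k + 1)) ^ α) n fun {k} _ => by
      rw [dist_eq_norm, pow_succ, ← div_div]
      exact hstep _ (by positivity) ((div_le_self ht.le (one_le_pow₀ one_le_two)).trans htb)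
  rw [Finset.sum_range_sub', pow_zero, div_one] at hchain
  rw [← dist_eq_norm]
  refine hchain.trans (sub_le_self _ ?_)
  exact mul_nonneg (div_nonneg hA h2α.le) (Real.rpow_nonneg (by positivity) _)

lemma norm_sub_le_rpow_of_le_two_mul (hα : 0 < α) (hA : 0 ≤ A)
    (hloc : ∀ s t, 0 < s → s ≤ t → t ≤ 2 * s → t ≤ b → ‖f t - f s‖ ≤ A * (t - s) ^ α) :
    ∀ s ∈ Ioc 0 b, ∀ t ∈ Ioc 0 b, ‖f t - f s‖ ≤ A * (1 + 2 ^ α / (2 ^ α - 1)) * |t - s| ^ α := by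
  intro s hs t ht
  wlog hst : s ≤ t generalizing s t
  · rw [norm_sub_rev, abs_sub_comm]
    exact this t ht s hs (le_of_not_ge hst)
  rw [abs_of_nonneg (sub_nonneg.2 hst)]
  have hD : 0 ≤ A / (2 ^ α - 1) :=
    div_nonneg hA (by linarith [Real.one_lt_rpow one_lt_two hα])
  have hsplit : ‖f t - f s‖ ≤ A * (t - s) ^ α + A / (2 ^ α - 1) * (2 * (t - s)) ^ α := by
    rcases le_or_gt t (2 * s) with hnear | hfar
    · exact (hloc s t hs.1 hst hnear ht.2).trans (le_add_of_nonneg_right (by positivity))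
    obtain ⟨n, hn, hn'⟩ := exists_nat_pow_near ((one_le_div hs.1).2 hst) one_lt_two
    have hsu : s ≤ t / 2 ^ n := by rwa [le_div_iff₀ (by positivity), mul_comm, ← le_div_iff₀ hs.1]
    have hu2s : t / 2 ^ n ≤ 2 * s := by
      rw [div_le_iff₀ (by positivity), mul_comm 2, mul_assoc, ← pow_succ']
      exact ((div_lt_iff₀ hs.1).1 hn').le.trans_eq (mul_comm _ _)
    have hut : t / 2 ^ n ≤ t := div_le_self ht.1.le (one_le_pow₀ one_le_two)
    calc ‖f t - f s‖ ≤ ‖f t - f (t / 2 ^ n)‖ + ‖f (t / 2 ^ n) - f s‖ :=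
          norm_sub_le_norm_sub_add_norm_sub _ _ _
      _ ≤ A / (2 ^ α - 1) * t ^ α + A * (t / 2 ^ n - s) ^ α :=
          add_le_add (norm_sub_div_two_pow_le hα hA hloc ht.1 ht.2 n)
            (hloc s _ hs.1 hsu hu2s (hut.trans ht.2))
      _ ≤ A * (t - s) ^ α + A / (2 ^ α - 1) * (2 * (t - s)) ^ α := by
          rw [add_comm]
          gcongr
          · linarith
          · linarith
  rw [Real.mul_rpow zero_le_two (sub_nonneg.2 hst)] at hsplit
  linear_combination hsplit

end HolderOnInterval

lemma norm_sub_comp_sq_le_of_le_two_mul {α η K : ℝ} (hα : 0 < α) (hαη : α ≤ 2 * η) (hK : 0 ≤ K)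
    {γ : ℝ → ℂ} (hγ : ∀ s t : ℝ, 0 < s → s < t → t ≤ 1 →
      ‖γ t - γ s‖ ≤ K * s ^ (η - α) * (t - s) ^ α)
    (s t : ℝ) (hs : 0 < s) (hst : s ≤ t) (ht2s : t ≤ 2 * s) (ht : t ≤ 1) :
    ‖γ (t ^ 2) - γ (s ^ 2)‖ ≤ K * 3 ^ α * (t - s) ^ α := by
  rcases hst.eq_or_lt with rfl | hst
  · simp [Real.zero_rpow hα.ne']
  have hsq : (s ^ 2) ^ (η - α) * s ^ α = s ^ (2 * η - α) := by
    rw [← Real.rpow_natCast, ← Real.rpow_mul hs.le, ← Real.rpow_add hs]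
    ring_nf
  calc ‖γ (t ^ 2) - γ (s ^ 2)‖ ≤ K * (s ^ 2) ^ (η - α) * (t ^ 2 - s ^ 2) ^ α :=
        hγ _ _ (by positivity) (by nlinarith) (by nlinarith)
    _ ≤ K * (s ^ 2) ^ (η - α) * (3 * s * (t - s)) ^ α := by
        gcongr
        · nlinarith
        · nlinarith
    _ = K * 3 ^ α * (t - s) ^ α * ((s ^ 2) ^ (η - α) * s ^ α) := by
        rw [Real.mul_rpow (by positivity) (by linarith), Real.mul_rpow (by norm_num) hs.le]
        ring
    _ ≤ K * 3 ^ α * (t - s) ^ α := by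
        rw [hsq]
        exact mul_le_of_le_one_right (by positivity) (Real.rpow_le_one hs.le (by linarith)
          (by linarith))

theorem singular_holder_square_reparametrisation_general
    (α η : ℝ) (hα0 : 0 < α)
    (hη0 : 0 < η) (hratio : α / η ≤ 2)
    (γ : ℝ → ℂ) (K : ℝ) (hK : 0 ≤ K)
    (hγ : ∀ s t : ℝ, 0 < s → s < t → t ≤ 1 →
      ‖γ t - γ s‖ ≤ K * s ^ (η - α) * (t - s) ^ α) :
    ∃ g : ℝ → ℂ,
      (∀ t ∈ Ioc (0:ℝ) 1, g t = γ (t ^ 2)) ∧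
      ∃ C : ℝ, 0 ≤ C ∧ ∀ s ∈ Icc (0:ℝ) 1, ∀ t ∈ Icc (0:ℝ) 1,
        ‖g t - g s‖ ≤ C * |t - s| ^ α := by
  have hαη : α ≤ 2 * η := by rwa [div_le_iff₀ hη0] at hratio
  have h3K : 0 ≤ K * 3 ^ α := by positivity
  obtain ⟨g, hg, hgC⟩ := exists_extend_Icc_of_norm_sub_le_rpow zero_lt_one hα0
    (norm_sub_le_rpow_of_le_two_mul (f := fun t => γ (t ^ 2)) hα0 h3K
      (norm_sub_comp_sq_le_of_le_two_mul hα0 hαη hK hγ))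
  refine ⟨g, hg, _, ?_, hgC⟩
  have h2α : 0 < (2 : ℝ) ^ α - 1 := by linarith [Real.one_lt_rpow one_lt_two hα0]
  positivity

/-- If `γ ∈ C^{α,η}((0,1];ℂ)` with `0 < η < 1/2`, `η ≤ α` and `α/η ≤ 2`, then
`t ↦ γ(t²)` extends to an `α`-Hölder continuous function on `[0,1]`. -/
theorem singular_holder_square_reparametrisation
    (α η : ℝ) (hα0 : 0 < α) (hα1 : α < 1)
    (hη0 : 0 < η) (hηhalf : η < 1 / 2) (hηα : η ≤ α) (hratio : α / η ≤ 2)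
    (γ : ℝ → ℂ) (K : ℝ) (hK : 0 ≤ K)
    (hγ : ∀ s t : ℝ, 0 < s → s < t → t ≤ 1 →
      ‖γ t - γ s‖ ≤ K * s ^ (η - α) * (t - s) ^ α) :
    ∃ g : ℝ → ℂ,
      (∀ t ∈ Ioc (0:ℝ) 1, g t = γ (t ^ 2)) ∧
      ∃ C : ℝ, 0 ≤ C ∧ ∀ s ∈ Icc (0:ℝ) 1, ∀ t ∈ Icc (0:ℝ) 1,
        ‖g t - g s‖ ≤ C * |t - s| ^ α :=
  singular_holder_square_reparametrisation_general α η hα0 hη0 hratio γ K hK hγ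
end
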